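/- arXiv:1608.05321 — 4 statements merged into one kernel-verified Lean document; each statement's English description precedes it below -/
import Mathlib

section
/- Every invariant polynomial function on n×n matrices (i.e., a polynomial in the entries that is invariant under conjugation B(gAg⁻¹) = B(A) for all invertible g) can be written uniquely as a polynomial in the functions σ_1(A),…,σ_n(A), where σ_k(A) is the k-th coefficient (up to sign) of the characteristic polynomial of A. -/
open MvPolynomial
open Matrix

/-- `σ k A` for `1 ≤ k ≤ n`: the coefficients of the characteristic polynomial, defined by
`det(tI + A) = ∑_{k=0}^n σ_k(A) t^{n-k}`; equivalently `σ_k(A) = tr(Λᵏ A)`.  Here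
`det(tI + A) = charpoly(−A)` evaluated at `t`, so `σ_k(A)` is the coefficient of
`t^{n−k}` in the characteristic polynomial of `−A`. -/
noncomputable def sigma {n : ℕ} (A : Matrix (Fin n) (Fin n) ℂ) (k : Fin n) : ℂ :=
  (Matrix.charpoly (-A)).coeff (n - (k.1 + 1))

variable {n : ℕ}

lemma eval_aeval {σ τ : Type*} (f : σ → MvPolynomial τ ℂ) (x : τ → ℂ)
    (B : MvPolynomial σ ℂ) :
    eval x (aeval f B) = eval (fun i => eval x (f i)) B := by
  have h := aeval_bind₁ (R := ℂ) x f B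
  rw [← aeval_eq_bind₁ f] at h
  have e1 : ∀ (g : τ → ℂ) (p : MvPolynomial τ ℂ), aeval g p = eval g p := fun g p => by
    rw [MvPolynomial.aeval_def, MvPolynomial.eval]; rfl
  have e2 : ∀ (g : σ → ℂ) (p : MvPolynomial σ ℂ), aeval g p = eval g p := fun g p => by
    rw [MvPolynomial.aeval_def, MvPolynomial.eval]; rfl
  simp only [e1, e2] at h
  exact h

lemma charpoly_diag (d : Fin n → ℂ) :
    (Matrix.diagonal d).charpoly = ∏ i, (Polynomial.X - Polynomial.C (d i)) := by
  rw [Matrix.charpoly]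
  have : charmatrix (Matrix.diagonal d) =
      Matrix.diagonal (fun i => Polynomial.X - Polynomial.C (d i)) := by
    ext i j
    by_cases h : i = j
    · subst h; simp [charmatrix_apply_eq]
    · rw [charmatrix_apply_ne _ _ _ h, Matrix.diagonal_apply_ne _ h, Matrix.diagonal_apply_ne _ h]
      simp
  rw [this, Matrix.det_diagonal]

/-- evaluation of elementary symmetric polynomials -/
noncomputable def Esym (x : Fin n → ℂ) (k : Fin n) : ℂ :=
  eval x (esymm (Fin n) ℂ (k.1 + 1))

lemma coeff_prod_X_add_C (x : Fin n → ℂ) (k : Fin n) :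
    (∏ i, (Polynomial.X + Polynomial.C (x i))).coeff (n - (k.1 + 1)) = Esym x k := by
  rw [Finset.prod_X_add_C_coeff]
  · have h1 : (Finset.univ : Finset (Fin n)).card = n := by simp
    rw [Esym, esymm, map_sum]
    rw [h1]
    have h2 : n - (n - (k.1 + 1)) = k.1 + 1 := by omega
    rw [h2]
    apply Finset.sum_congr rfl
    intro t _
    simp
  · have : n - (k.1 + 1) ≤ n := Nat.sub_le _ _
    simpa using this

lemma sigma_diag (x : Fin n → ℂ) : sigma (Matrix.diagonal x) = Esym x := by
  funext k
  rw [sigma]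
  have hneg : -Matrix.diagonal x = Matrix.diagonal (fun i => -x i) := by
    ext i j; by_cases h : i = j
    · subst h; simp
    · simp [Matrix.diagonal_apply_ne _ h]
  rw [hneg, charpoly_diag, ← coeff_prod_X_add_C x k]
  congr 1
  apply Finset.prod_congr rfl
  intro i _
  simp [sub_neg_eq_add]

lemma charpoly_conj (g A : Matrix (Fin n) (Fin n) ℂ) (hg : IsUnit g) :
    (g * A * g⁻¹).charpoly = A.charpoly := by
  have hd : IsUnit g.det := (Matrix.isUnit_iff_isUnit_det g).mp hg
  have h1 : g * g⁻¹ = 1 := Matrix.mul_nonsing_inv g hd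
  set φ : Matrix (Fin n) (Fin n) ℂ →+* Matrix (Fin n) (Fin n) (Polynomial ℂ) :=
    (Polynomial.C (R := ℂ)).mapMatrix with hφ
  have hgg : φ g * φ g⁻¹ = 1 := by rw [← _root_.map_mul, h1, _root_.map_one]
  set D : Matrix (Fin n) (Fin n) (Polynomial ℂ) :=
    Matrix.diagonal (fun _ => Polynomial.X) with hD
  have comm : φ g * D = D * φ g := by
    ext i j
    simp [hD, Matrix.mul_diagonal, Matrix.diagonal_mul, mul_comm]
  have key : charmatrix (g * A * g⁻¹) = φ g * charmatrix A * φ g⁻¹ := by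
    have hc : ∀ M : Matrix (Fin n) (Fin n) ℂ, charmatrix M = D - φ M := by
      intro M; rfl
    rw [hc, hc]
    calc D - φ (g * A * g⁻¹)
        = (φ g * D) * φ g⁻¹ - (φ g * φ A) * φ g⁻¹ := by
          rw [comm, mul_assoc D (φ g) (φ g⁻¹), hgg, mul_one, ← _root_.map_mul, ← _root_.map_mul]
      _ = φ g * (D - φ A) * φ g⁻¹ := by rw [Matrix.mul_sub, Matrix.sub_mul]
  rw [Matrix.charpoly, Matrix.charpoly, key, Matrix.det_mul, Matrix.det_mul]
  have : (φ g).det * (φ g⁻¹).det = 1 := by rw [← Matrix.det_mul, hgg, Matrix.det_one]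
  calc (φ g).det * (charmatrix A).det * (φ g⁻¹).det
      = (φ g).det * (φ g⁻¹).det * (charmatrix A).det := by ring
    _ = (charmatrix A).det := by rw [this, one_mul]

lemma sigma_conj (g A : Matrix (Fin n) (Fin n) ℂ) (hg : IsUnit g) :
    sigma (g * A * g⁻¹) = sigma A := by
  funext k
  rw [sigma, sigma]
  have : -(g * A * g⁻¹) = g * (-A) * g⁻¹ := by noncomm_ring
  rw [this, charpoly_conj g (-A) hg]

/-- the generic matrix -/
noncomputable def genM (n : ℕ) : Matrix (Fin n) (Fin n) (MvPolynomial (Fin n × Fin n) ℂ) :=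
  Matrix.of fun i j => X (i, j)

/-- `sigma` as a polynomial in the matrix entries -/
noncomputable def sigmaPoly (n : ℕ) (k : Fin n) : MvPolynomial (Fin n × Fin n) ℂ :=
  ((-(genM n)).charpoly).coeff (n - (k.1 + 1))

lemma eval_sigmaPoly (A : Matrix (Fin n) (Fin n) ℂ) (k : Fin n) :
    eval (fun p => A p.1 p.2) (sigmaPoly n k) = sigma A k := by
  rw [sigmaPoly, sigma]
  have h1 : (eval (fun p : Fin n × Fin n => A p.1 p.2)) (((-(genM n)).charpoly).coeff (n - (k.1+1)))
      = (((-(genM n)).charpoly).map (eval (fun p : Fin n × Fin n => A p.1 p.2))).coeff (n - (k.1+1)) := by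
    rw [Polynomial.coeff_map]
  rw [h1, ← Matrix.charpoly_map]
  congr 2
  ext i j
  simp [genM]

lemma diag_perm_conj (x : Fin n → ℂ) (s : Equiv.Perm (Fin n)) :
    ∃ g : Matrix (Fin n) (Fin n) ℂ, IsUnit g ∧
      g * Matrix.diagonal x * g⁻¹ = Matrix.diagonal (x ∘ s) := by
  set P : Matrix (Fin n) (Fin n) ℂ := Matrix.of fun i j => if j = s i then 1 else 0 with hP
  set P' : Matrix (Fin n) (Fin n) ℂ := Matrix.of fun i j => if i = s j then 1 else 0 with hP'
  have hPP' : P * P' = 1 := by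
    ext i j
    rw [Matrix.mul_apply]
    rw [Finset.sum_eq_single (s i) (fun k _ hk => by simp [hP, hP', hk])
      (by simp)]
    by_cases h : i = j
    · subst h; simp [hP, hP']
    · simp [hP, hP', Matrix.one_apply_ne h, h, fun hc : s i = s j => h (s.injective hc)]
  have hu : IsUnit P := by
    have := invertibleOfRightInverse P P' hPP'
    exact isUnit_of_invertible P
  have hinv : P⁻¹ = P' := Matrix.inv_eq_right_inv hPP'
  refine ⟨P, hu, ?_⟩
  rw [hinv]
  ext i j
  rw [Matrix.mul_apply]
  rw [Finset.sum_eq_single (s i) (fun k _ hk => by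
      simp only [Matrix.mul_apply]
      rw [Finset.sum_eq_single k (fun m _ hm => by
        simp only [hP, Matrix.of_apply, Matrix.diagonal_apply, mul_ite, mul_zero, mul_one,
          ite_eq_right_iff]
        intro h1; exact absurd h1 hm)
        (by simp)]
      simp only [hP, hP', Matrix.of_apply, Matrix.diagonal_apply_eq, mul_ite, mul_zero, mul_one,
        ite_eq_right_iff]
      intro h2; simp [hk])
    (by simp)]
  simp only [Matrix.mul_apply]
  rw [Finset.sum_eq_single (s i) (fun m _ hm => by
    simp only [hP, Matrix.of_apply, Matrix.diagonal_apply, mul_ite, mul_zero, mul_one,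
      ite_eq_right_iff]
    intro h1; exact absurd h1 hm)
    (by simp)]
  by_cases h : i = j
  · subst h; simp [hP, hP']
  · simp only [hP, hP', Matrix.of_apply, Matrix.diagonal_apply_eq, Function.comp_apply,
      Matrix.diagonal_apply_ne _ h, mul_ite, mul_zero, mul_one, ite_eq_right_iff]
    intro hc
    first
    | exact absurd hc h
    | exact absurd (s.injective hc) h

/-- the discriminant-like product over ordered pairs -/
noncomputable def Delta (n : ℕ) : MvPolynomial (Fin n) ℂ :=
  ∏ p ∈ (Finset.univ : Finset (Fin n)).offDiag, (X p.1 - X p.2)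

lemma eval_Delta (x : Fin n → ℂ) :
    eval x (Delta n) = ∏ p ∈ (Finset.univ : Finset (Fin n)).offDiag, (x p.1 - x p.2) := by
  rw [Delta, map_prod]
  simp

lemma Delta_symm : (Delta n).IsSymmetric := by
  intro s
  rw [Delta, map_prod]
  simp only [map_sub, rename_X]
  refine Finset.prod_equiv (s.prodCongr s) ?_ ?_
  · intro p
    simp only [Finset.mem_offDiag, Equiv.prodCongr_apply, Prod.map]
    constructor
    · rintro ⟨-, -, h⟩; exact ⟨Finset.mem_univ _, Finset.mem_univ _, fun hc => h (s.injective hc)⟩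
    · rintro ⟨-, -, h⟩; exact ⟨Finset.mem_univ _, Finset.mem_univ _, fun hc => h (hc ▸ rfl)⟩
  · intro p _
    simp [Prod.map]

lemma exists_Q_of_symm (p : MvPolynomial (Fin n) ℂ) (hp : p.IsSymmetric) :
    ∃ Q : MvPolynomial (Fin n) ℂ, ∀ x : Fin n → ℂ, eval x p = eval (Esym x) Q := by
  obtain ⟨Q, hQ⟩ := esymmAlgHom_surjective (R := ℂ) (σ := Fin n) (n := n)
    (by simp) ⟨p, hp⟩
  refine ⟨Q, fun x => ?_⟩
  have h1 : aeval (fun i : Fin n => esymm (Fin n) ℂ (i + 1)) Q = p := by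
    rw [← esymmAlgHom_apply, hQ]
  rw [← h1, eval_aeval]
  rfl

lemma charpoly_eval (M : Matrix (Fin n) (Fin n) ℂ) (r : ℂ) :
    M.charpoly.eval r = (Matrix.scalar (Fin n) r - M).det := by
  rw [Matrix.charpoly, _root_.eval_det, matPolyEquiv_charmatrix]
  simp

lemma exists_mu (A : Matrix (Fin n) (Fin n) ℂ) :
    ∃ μ : Fin n → ℂ, sigma A = Esym μ ∧
      (Function.Injective μ → ∃ g, IsUnit g ∧ A = g * Matrix.diagonal μ * g⁻¹) := by
  set p := (-A).charpoly with hp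
  have hmonic : p.Monic := Matrix.charpoly_monic _
  have hdeg : p.natDegree = n := by
    rw [hp, Matrix.charpoly_natDegree_eq_dim, Fintype.card_fin]
  have hsplits : p.Splits := IsAlgClosed.splits p
  have hcard : p.roots.card = n := by
    rw [(Polynomial.splits_iff_card_roots).mp hsplits, hdeg]
  set l := p.roots.toList with hl
  have hlen : l.length = n := by rw [hl, Multiset.length_toList, hcard]
  set ν : Fin n → ℂ := fun i => l.get (Fin.cast hlen.symm i) with hν
  have hfact : p = ∏ i, (Polynomial.X - Polynomial.C (ν i)) := by
    have h1 := hsplits.eq_prod_roots_of_monic hmonic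
    have h2 : p.roots = (l : Multiset ℂ) := (Multiset.coe_toList _).symm
    rw [h2] at h1
    rw [h1, Multiset.map_coe, Multiset.prod_coe]
    have h3 : l = List.ofFn l.get := (List.ofFn_get l).symm
    conv_lhs => rw [h3, List.map_ofFn, List.prod_ofFn]
    exact Fintype.prod_equiv (finCongr hlen) _ _ (fun i => rfl)
  set μ : Fin n → ℂ := fun i => -ν i with hμ
  have hfact' : p = ∏ i, (Polynomial.X + Polynomial.C (μ i)) := by
    rw [hfact]
    exact Finset.prod_congr rfl fun i _ => by rw [hμ]; simp [sub_eq_add_neg]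
  refine ⟨μ, ?_, ?_⟩
  · funext k
    rw [sigma, ← hp, hfact', coeff_prod_X_add_C]
  · intro hinj
    rcases Nat.eq_zero_or_pos n with h0 | h0
    · refine ⟨1, isUnit_one, ?_⟩
      ext i j
      exact absurd i.isLt (by omega)
    haveI : Nonempty (Fin n) := ⟨⟨0, h0⟩⟩
    have heig : ∀ i, ∃ v : Fin n → ℂ, v ≠ 0 ∧ A *ᵥ v = μ i • v := by
      intro i
      have hroot : p.eval (ν i) = 0 := by
        rw [hfact, Polynomial.eval_prod]
        refine Finset.prod_eq_zero (Finset.mem_univ i) ?_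
        simp
      rw [charpoly_eval, sub_neg_eq_add] at hroot
      obtain ⟨v, hv0, hv⟩ := (Matrix.exists_mulVec_eq_zero_iff).mpr hroot
      refine ⟨v, hv0, ?_⟩
      rw [Matrix.add_mulVec] at hv
      have hscal : (Matrix.scalar (Fin n) (ν i)) *ᵥ v = ν i • v := by
        funext j
        simp [Matrix.scalar, Matrix.mulVec_diagonal]
      rw [hscal] at hv
      have := eq_neg_of_add_eq_zero_right hv
      rw [this, hμ]
      simp [neg_smul]
    choose v hv0 hveq using heig
    set f : Module.End ℂ (Fin n → ℂ) := Matrix.mulVecLin A with hf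
    have hev : ∀ i, f.HasEigenvector (μ i) (v i) := fun i =>
      ⟨Module.End.mem_eigenspace_iff.2 (by rw [hf]; simpa using hveq i), hv0 i⟩
    have li : LinearIndependent ℂ v := Module.End.eigenvectors_linearIndependent' f μ hinj v hev
    have hcard2 : Fintype.card (Fin n) = Module.finrank ℂ (Fin n → ℂ) := by
      simp [Module.finrank_fin_fun]
    let b : Module.Basis (Fin n) ℂ (Fin n → ℂ) := basisOfLinearIndependentOfCardEqFinrank li hcard2
    have hb : ⇑b = v := coe_basisOfLinearIndependentOfCardEqFinrank li hcard2
    set g : Matrix (Fin n) (Fin n) ℂ := (Pi.basisFun ℂ (Fin n)).toMatrix ⇑b with hg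
    have : Invertible g := (Pi.basisFun ℂ (Fin n)).invertibleToMatrix b
    have hgu : IsUnit g := isUnit_of_invertible g
    have hgv : ∀ i j, g i j = v j i := by
      intro i j
      rw [hg, Module.Basis.toMatrix_apply, hb, Pi.basisFun_repr]
    have hAg : A * g = g * Matrix.diagonal μ := by
      ext i j
      rw [Matrix.mul_apply, Matrix.mul_diagonal, hgv]
      have : ∑ k, A i k * g k j = (A *ᵥ v j) i := by
        rw [Matrix.mulVec, dotProduct]
        exact Finset.sum_congr rfl fun k _ => by rw [hgv]
      rw [this, hveq]
      simp [mul_comm]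
    refine ⟨g, hgu, ?_⟩
    have hdet : IsUnit g.det := (Matrix.isUnit_iff_isUnit_det g).mp hgu
    calc A = A * (g * g⁻¹) := by rw [Matrix.mul_nonsing_inv g hdet, mul_one]
      _ = (A * g) * g⁻¹ := by rw [mul_assoc]
      _ = g * Matrix.diagonal μ * g⁻¹ := by rw [hAg]

lemma exists_prod_X_add_C (q : Polynomial ℂ) (hmonic : q.Monic) (hdeg : q.natDegree = n) :
    ∃ x : Fin n → ℂ, q = ∏ i, (Polynomial.X + Polynomial.C (x i)) := by
  have hsplits : q.Splits := IsAlgClosed.splits q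
  have hcard : q.roots.card = n := by
    rw [(Polynomial.splits_iff_card_roots).mp hsplits, hdeg]
  set l := q.roots.toList with hl
  have hlen : l.length = n := by rw [hl, Multiset.length_toList, hcard]
  set ν : Fin n → ℂ := fun i => l.get (Fin.cast hlen.symm i) with hν
  have hfact : q = ∏ i, (Polynomial.X - Polynomial.C (ν i)) := by
    have h1 := hsplits.eq_prod_roots_of_monic hmonic
    have h2 : q.roots = (l : Multiset ℂ) := (Multiset.coe_toList _).symm
    rw [h2] at h1
    rw [h1, Multiset.map_coe, Multiset.prod_coe]
    have h3 : l = List.ofFn l.get := (List.ofFn_get l).symm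
    conv_lhs => rw [h3, List.map_ofFn, List.prod_ofFn]
    exact Fintype.prod_equiv (finCongr hlen) _ _ (fun i => rfl)
  refine ⟨fun i => -ν i, ?_⟩
  rw [hfact]
  exact Finset.prod_congr rfl fun i _ => by simp [sub_eq_add_neg]

lemma Esym_surj (y : Fin n → ℂ) : ∃ x : Fin n → ℂ, Esym x = y := by
  rcases Nat.eq_zero_or_pos n with h0 | h0
  · exact ⟨fun _ => 0, funext fun k => absurd k.isLt (by omega)⟩
  set q : Polynomial ℂ :=
    Polynomial.X ^ n + ∑ k : Fin n, Polynomial.C (y k) * Polynomial.X ^ (n - (k.1 + 1)) with hq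
  have hdegsum : (∑ k : Fin n, Polynomial.C (y k) * Polynomial.X ^ (n - (k.1 + 1))).degree
      < (n : WithBot ℕ) := by
    refine lt_of_le_of_lt (Polynomial.degree_sum_le _ _) ?_
    rw [Finset.sup_lt_iff (by exact_mod_cast WithBot.bot_lt_coe n)]
    intro k _
    refine lt_of_le_of_lt (Polynomial.degree_C_mul_X_pow_le _ _) ?_
    exact_mod_cast (by omega : n - (k.1 + 1) < n)
  have hmonic : q.Monic := Polynomial.monic_X_pow_add hdegsum
  have hdeg : q.natDegree = n := by
    have hdq : q.degree = n := by
      rw [hq, Polynomial.degree_add_eq_left_of_degree_lt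
        (by rwa [Polynomial.degree_X_pow]), Polynomial.degree_X_pow]
    exact Polynomial.natDegree_eq_of_degree_eq_some hdq
  obtain ⟨x, hx⟩ := exists_prod_X_add_C q hmonic hdeg
  refine ⟨x, funext fun k => ?_⟩
  rw [← coeff_prod_X_add_C x k, ← hx, hq]
  rw [Polynomial.coeff_add, Polynomial.coeff_X_pow, if_neg (by omega : ¬ n - (k.1+1) = n)]
  rw [Polynomial.finset_sum_coeff]
  rw [Finset.sum_eq_single k (fun m _ hm => by
    rw [Polynomial.coeff_C_mul, Polynomial.coeff_X_pow,
      if_neg (fun hc : n - (k.1+1) = n - (m.1+1) => hm (by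
        have h1 : m.1 = k.1 := by omega
        exact Fin.ext h1)), mul_zero])
    (fun h => absurd (Finset.mem_univ k) h)]
  rw [Polynomial.coeff_C_mul, Polynomial.coeff_X_pow, if_pos rfl, mul_one, zero_add]


/-- Every invariant polynomial function `B` on `n×n` complex matrices (a polynomial in
the entries with `B(gAg⁻¹) = B(A)` for all invertible `g`) can be written, uniquely as a
polynomial expression evaluated on matrices, as a polynomial `Q` in the characteristic
coefficients `σ₁(A), …, σₙ(A)`. -/
theorem invariant_polynomial_eq_polynomial_in_sigma (n : ℕ)
    (B : MvPolynomial (Fin n × Fin n) ℂ)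
    (hB : ∀ g A : Matrix (Fin n) (Fin n) ℂ, IsUnit g →
      eval (fun p => (g * A * g⁻¹) p.1 p.2) B = eval (fun p => A p.1 p.2) B) :
    ∃! Q : MvPolynomial (Fin n) ℂ, ∀ A : Matrix (Fin n) (Fin n) ℂ,
      eval (fun p => A p.1 p.2) B = eval (sigma A) Q := by
  set pdiag : MvPolynomial (Fin n) ℂ :=
    aeval (fun ij : Fin n × Fin n => if ij.1 = ij.2 then X ij.1 else 0) B with hpd
  have hpdiag_eval : ∀ x : Fin n → ℂ,
      eval x pdiag = eval (fun ij : Fin n × Fin n => Matrix.diagonal x ij.1 ij.2) B := by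
    intro x
    rw [hpd, eval_aeval]
    have he : (fun ij : Fin n × Fin n => eval x (if ij.1 = ij.2 then X ij.1 else 0))
        = fun ij : Fin n × Fin n => Matrix.diagonal x ij.1 ij.2 := by
      funext ij
      by_cases h : ij.1 = ij.2 <;> simp [h, Matrix.diagonal_apply]
    rw [he]
  have hsym : pdiag.IsSymmetric := by
    intro s
    apply MvPolynomial.funext
    intro x
    rw [eval_rename, hpdiag_eval, hpdiag_eval]
    obtain ⟨g, hg, hgd⟩ := diag_perm_conj x s
    rw [← hgd]
    exact hB g (Matrix.diagonal x) hg
  obtain ⟨Q, hQ⟩ := exists_Q_of_symm pdiag hsym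
  obtain ⟨δ, hδ⟩ := exists_Q_of_symm (Delta n) Delta_symm
  have heval_aQ : ∀ (R : MvPolynomial (Fin n) ℂ) (A : Matrix (Fin n) (Fin n) ℂ),
      eval (fun p => A p.1 p.2) (aeval (sigmaPoly n) R) = eval (sigma A) R := by
    intro R A
    rw [eval_aeval]
    have he : (fun k => eval (fun p : Fin n × Fin n => A p.1 p.2) (sigmaPoly n k)) = sigma A :=
      funext (eval_sigmaPoly A)
    rw [he]
  set err : MvPolynomial (Fin n × Fin n) ℂ := B - aeval (sigmaPoly n) Q with herr
  set Dp : MvPolynomial (Fin n × Fin n) ℂ := aeval (sigmaPoly n) δ with hDp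
  have hzero : err * Dp = 0 := by
    apply MvPolynomial.funext
    intro x
    rw [_root_.map_mul, _root_.map_zero]
    set A : Matrix (Fin n) (Fin n) ℂ := Matrix.of (fun i j => x (i, j)) with hA
    have hxA : (fun p : Fin n × Fin n => A p.1 p.2) = x := by funext p; rfl
    by_cases hd : eval (sigma A) δ = 0
    · have : eval x Dp = 0 := by rw [hDp, ← hxA, heval_aQ δ A, hd]
      rw [this, mul_zero]
    · obtain ⟨μ, hμ1, hμ2⟩ := exists_mu A
      have hinj : Function.Injective μ := by
        have h2 : eval μ (Delta n) ≠ 0 := by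
          rw [hδ μ, ← hμ1]; exact hd
        rw [eval_Delta] at h2
        intro a b hab
        by_contra hne
        refine h2 (Finset.prod_eq_zero (i := (a, b))
          (Finset.mem_offDiag.2 ⟨Finset.mem_univ _, Finset.mem_univ _, hne⟩) ?_)
        show μ a - μ b = 0
        rw [hab, sub_self]
      obtain ⟨g, hg, hgA⟩ := hμ2 hinj
      have hBA : eval x B = eval (sigma A) Q := by
        calc eval x B = eval (fun p : Fin n × Fin n => A p.1 p.2) B := by rw [hxA]
          _ = eval (fun p : Fin n × Fin n => (g * Matrix.diagonal μ * g⁻¹) p.1 p.2) B := by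
              rw [← hgA]
          _ = eval (fun p : Fin n × Fin n => (Matrix.diagonal μ) p.1 p.2) B :=
              hB g (Matrix.diagonal μ) hg
          _ = eval μ pdiag := (hpdiag_eval μ).symm
          _ = eval (Esym μ) Q := hQ μ
          _ = eval (sigma A) Q := by rw [hμ1]
      have : eval x err = 0 := by
        rw [herr, map_sub, hBA, ← hxA, heval_aQ Q A, sub_self]
      rw [this, zero_mul]
  have hDne : Dp ≠ 0 := by
    intro hc
    set c : Fin n → ℂ := fun i => (i.1 : ℂ) with hc'
    have hinjc : Function.Injective c := by
      intro a b hab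
      exact Fin.ext (Nat.cast_injective hab)
    have h1 : eval (fun p : Fin n × Fin n => (Matrix.diagonal c) p.1 p.2) Dp
        = eval c (Delta n) := by
      rw [hDp, heval_aQ δ (Matrix.diagonal c), sigma_diag, ← hδ]
    rw [hc, map_zero] at h1
    rw [eval_Delta] at h1
    have h2 : ∏ p ∈ (Finset.univ : Finset (Fin n)).offDiag, (c p.1 - c p.2) ≠ 0 := by
      rw [Finset.prod_ne_zero_iff]
      intro p hp
      rw [Finset.mem_offDiag] at hp
      exact sub_ne_zero_of_ne (fun hcc => hp.2.2 (hinjc hcc))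
    exact h2 h1.symm
  have herr0 : err = 0 := by
    rcases mul_eq_zero.mp hzero with h | h
    · exact h
    · exact absurd h hDne
  have main : ∀ A : Matrix (Fin n) (Fin n) ℂ,
      eval (fun p => A p.1 p.2) B = eval (sigma A) Q := by
    intro A
    have h := congrArg (eval (fun p : Fin n × Fin n => A p.1 p.2)) herr0
    rw [herr, map_sub, map_zero, sub_eq_zero, heval_aQ Q A] at h
    exact h
  refine ⟨Q, main, ?_⟩
  intro Q' hQ'
  apply MvPolynomial.funext
  intro y
  obtain ⟨x, hx⟩ := Esym_surj y
  have h1 : eval (sigma (Matrix.diagonal x)) Q' = eval (sigma (Matrix.diagonal x)) Q := by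
    rw [← hQ' (Matrix.diagonal x), main (Matrix.diagonal x)]
  rwa [sigma_diag, hx] at h1
end

section
/- For f a transversal endomorphism of ℙ¹ of degree d ≥ 2 with fixed points p_i and multipliers λ_i = f'(p_i), one has ∑_i λ_i/(1 − λ_i) = −d (the case k = 1 of the Woods Hole formula on ℙ¹). -/
/-!
At a fixed point `z` of `f = p/q`, i.e. a root of `R = p - X q`, one has `f'(z) = 1 + R'(z)/q(z)`,
so `λ/(1 - λ) = -1 - q(z)/R'(z)`. Summing over the `d + 1` simple roots of `R`, the partial
fraction identity `∑ q(z)/R'(z) = q_d / lc(R)` together with `lc(R) = -q_d` gives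
`-(d + 1) + 1 = -d`.
-/

open Polynomial

/-- The multiplier of the rational map `f = p/q` at a point `z` (with `q(z) ≠ 0`):
the value `f'(z) = (p'(z)q(z) − p(z)q'(z))/q(z)²`. -/
noncomputable def multiplier (p q : Polynomial ℂ) (z : ℂ) : ℂ :=
  (p.derivative.eval z * q.eval z - p.eval z * q.derivative.eval z) / (q.eval z) ^ 2

open Finset

namespace Polynomial

theorem Splits.eval_root_derivative_eq_leadingCoeff_mul {R : Type*} [CommRing R] [IsDomain R]
    [DecidableEq R] {f : R[X]} (hf : f.Splits) {x : R} (hx : x ∈ f.roots) :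
    f.derivative.eval x = f.leadingCoeff * ((f.roots.erase x).map (x - ·)).prod := by
  conv_lhs => rw [hf.eq_prod_roots]
  rw [derivative_C_mul, eval_mul, eval_C, eval_multiset_prod_X_sub_C_derivative hx]

/-- Partial fractions of `q / f` read off at infinity (Euler–Jacobi for one variable). -/
theorem Splits.sum_roots_eval_div_eval_derivative {F : Type*} [Field F] [DecidableEq F]
    {f q : F[X]} (hf : f.Splits) (hnd : f.roots.Nodup) (hq : q.degree < f.degree) :
    ∑ z ∈ f.roots.toFinset, q.eval z / f.derivative.eval z =
      q.coeff (f.natDegree - 1) / f.leadingCoeff := by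
  set s := f.roots.toFinset
  have hs : s.val = f.roots := by rw [Multiset.toFinset_val, hnd.dedup]
  have hcard : #s = f.natDegree := by
    rw [Finset.card, hs, hf.natDegree_eq_card_roots]
  have hderiv : ∀ z ∈ s, f.derivative.eval z = f.leadingCoeff * ∏ j ∈ s.erase z, (z - j) := by
    intro z hz
    rw [hf.eval_root_derivative_eq_leadingCoeff_mul (Multiset.mem_toFinset.mp hz),
      Finset.prod_eq_multiset_prod, Finset.erase_val, hs]
  have hqs : q.degree < #s := by
    rw [hcard]; exact hq.trans_le degree_le_natDegree
  rw [← hcard, Lagrange.coeff_eq_sum (Set.injOn_id _) hqs, Finset.sum_div]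
  refine Finset.sum_congr rfl fun z hz => ?_
  rw [hderiv z hz, mul_comm, div_mul_eq_div_div]
  rfl

theorem leadingCoeff_sub_X_mul {R : Type*} [Ring R] {p q : R[X]} {d : ℕ} (hp : p.natDegree ≤ d)
    (hpq : (p - X * q).natDegree = d + 1) : (p - X * q).leadingCoeff = -q.coeff d := by
  rw [leadingCoeff, hpq, coeff_sub, coeff_X_mul,
    coeff_eq_zero_of_natDegree_lt (hp.trans_lt d.lt_succ_self), zero_sub]

end Polynomial

theorem multiplier_eq_one_add_of_isRoot {p q : ℂ[X]} {z : ℂ} (hz : (p - X * q).IsRoot z)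
    (hqz : q.eval z ≠ 0) :
    multiplier p q z = 1 + (p - X * q).derivative.eval z / q.eval z := by
  have hpz : p.eval z = z * q.eval z := by
    simpa [sub_eq_zero] using hz
  simp only [multiplier, hpz, derivative_sub, derivative_mul, derivative_X, eval_sub, eval_add,
    eval_mul, eval_X, one_mul]
  field_simp
  ring

theorem multiplier_div_one_sub_multiplier_of_isRoot {p q : ℂ[X]} {z : ℂ}
    (hz : (p - X * q).IsRoot z) (hqz : q.eval z ≠ 0) (hz' : (p - X * q).derivative.eval z ≠ 0) :
    multiplier p q z / (1 - multiplier p q z) =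
      -1 - q.eval z / (p - X * q).derivative.eval z := by
  rw [multiplier_eq_one_add_of_isRoot hz hqz, sub_add_cancel_left]
  field_simp
  ring

theorem woods_hole_P1_k_one_general (d : ℕ) (p q : Polynomial ℂ)
    (hp : p.natDegree ≤ d) (hq : q.natDegree ≤ d)
    (hR : (p - X * q).natDegree = d + 1)
    (hsq : Squarefree (p - X * q))
    (hq0 : ∀ z ∈ (p - X * q).roots, q.eval z ≠ 0) :
    ∑ z ∈ (p - X * q).roots.toFinset, multiplier p q z / (1 - multiplier p q z) = -(d : ℂ) := by
  have hsep : (p - X * q).Separable := PerfectField.separable_iff_squarefree.mpr hsq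
  have hR0 : p - X * q ≠ 0 := fun h => by simp [h] at hR
  have hlead := leadingCoeff_sub_X_mul hp hR
  have hqd : q.coeff d ≠ 0 := fun h => hR0 (leadingCoeff_eq_zero.mp (by rw [hlead, h, neg_zero]))
  have hdeg : q.degree < (p - X * q).degree := by
    rw [degree_eq_natDegree hR0, hR]
    exact (degree_le_of_natDegree_le hq).trans_lt (by exact_mod_cast d.lt_succ_self)
  have hterm : ∀ z ∈ (p - X * q).roots.toFinset, multiplier p q z / (1 - multiplier p q z) =
      -1 - q.eval z / (p - X * q).derivative.eval z := fun z hz =>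
    have hmem := Multiset.mem_toFinset.mp hz
    have hroot := isRoot_of_mem_roots hmem
    multiplier_div_one_sub_multiplier_of_isRoot hroot (hq0 z hmem)
      (by simpa using hsep.aeval_derivative_ne_zero (x := z) (by simpa using hroot))
  have hsplit := IsAlgClosed.splits (p - X * q)
  calc ∑ z ∈ (p - X * q).roots.toFinset, multiplier p q z / (1 - multiplier p q z)
      = -(d + 1 : ℂ) - q.coeff d / -q.coeff d := by
        rw [Finset.sum_congr rfl hterm, Finset.sum_sub_distrib, Finset.sum_const,
          Multiset.toFinset_card_of_nodup (nodup_roots hsep), ← hsplit.natDegree_eq_card_roots, hR,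
          hsplit.sum_roots_eval_div_eval_derivative (nodup_roots hsep) hdeg, hR, hlead]
        push_cast
        ring
    _ = -d := by
        rw [div_neg, div_self hqd]
        ring

/-- Holomorphic Lefschetz fixed point formula on `ℙ¹`: a transversal endomorphism
`f = p/q` of `ℙ¹` of degree `d ≥ 2` has its fixed points at the roots of
`R(z) = p(z) − z·q(z)`, a polynomial of degree `d + 1` assumed squarefree (simple fixed
points, none at infinity); with multipliers `λ_z = f'(z) ≠ 1` one has
`∑_{f(z)=z} λ_z/(1 − λ_z) = −d` (the case `k = 1` of the Woods Hole formula on `ℙ¹`). -/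
theorem woods_hole_P1_k_one (d : ℕ) (hd : 2 ≤ d) (p q : Polynomial ℂ)
    (hp : p.natDegree ≤ d) (hq : q.natDegree ≤ d)
    (hR : (p - X * q).natDegree = d + 1)
    (hsq : Squarefree (p - X * q))
    (hq0 : ∀ z ∈ (p - X * q).roots, q.eval z ≠ 0)
    (hmul : ∀ z ∈ (p - X * q).roots, multiplier p q z ≠ 1) :
    ∑ z ∈ (p - X * q).roots.toFinset, multiplier p q z / (1 - multiplier p q z) = -(d : ℂ) :=
  woods_hole_P1_k_one_general d p q hp hq hR hsq hq0
end

section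
/- The sheaf Ω^q_{ℙ^n}(−p) (twist of the sheaf of holomorphic q-forms on ℙ^n by O(−p)) has vanishing cohomology in all degrees whenever p ≥ 1, q ≥ 0 and p + q ≤ n. -/
open Finset

namespace BottVanishing

/-!
We model the cohomology of the twisted sheaves `Ω^q_{ℙⁿ}(m)` by the Čech complex of the
standard affine cover `U_i = {x_i ≠ 0}`, `i : Fin (n+1)`, of `ℙⁿ`.

In homogeneous coordinates, a section of `Ω^q_{ℙⁿ}(m)` over the intersection
`U_S = ⋂_{i ∈ S} U_i` is a `q`-form `ω = ∑_{T} c_T dx_{t₁} ∧ ⋯ ∧ dx_{t_q}` (sum over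
`q`-element subsets `T = {t₁ < ⋯ < t_q}` of `{0, …, n}`) whose coefficients `c_T` are
Laurent polynomials in `x_0, …, x_n` with poles only at the `x_i`, `i ∈ S`, homogeneous
of total degree `m − q`, and which is annihilated by contraction with the Euler vector
field `E = ∑ x_i ∂/∂x_i`.  Laurent polynomials are recorded by their (finitely supported)
coefficient functions on exponents `a : Fin (n+1) → ℤ`.
-/

/-- Laurent polynomials in `x_0, …, x_n`, recorded by coefficient functions. -/
abbrev Laurent (n : ℕ) := (Fin (n + 1) → ℤ) →₀ ℂ

/-- A `q`-form: a Laurent coefficient for each `q`-element subset `T` (the coefficient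
of `dx_{t₁} ∧ ⋯ ∧ dx_{t_q}`). -/
abbrev Form (n q : ℕ) := {T : Finset (Fin (n + 1)) // T.card = q} → Laurent n

/-- The exponent of the monomial `x_i`. -/
def single (n : ℕ) (i : Fin (n + 1)) : Fin (n + 1) → ℤ := fun j => if j = i then 1 else 0

/-- `ω` is a section of `Ω^q_{ℙⁿ}(m)` over the chart intersection `U_S`:
(1) every monomial appearing in a coefficient of `ω` has nonnegative exponents outside
`S` and total degree `m − q`; (2) the contraction of `ω` with the Euler vector field
vanishes: for every `(q−1)`-subset `U` and every exponent `b`, the coefficient of the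
monomial `x^b` in `∑_{i ∉ U} (−1)^{#{j ∈ U | j < i}} x_i · c_{U ∪ {i}}` is zero. -/
def IsSection (n q : ℕ) (m : ℤ) (S : Finset (Fin (n + 1))) (ω : Form n q) : Prop :=
  (∀ T a, ω T a ≠ 0 → (∀ i ∉ S, 0 ≤ a i) ∧ (∑ i, a i) = m - q) ∧
  (∀ U : Finset (Fin (n + 1)), ∀ hU : U.card + 1 = q, ∀ b : Fin (n + 1) → ℤ,
    ∑ i ∈ Uᶜ.attach,
      (-1 : ℂ) ^ (U.filter (fun j => j < i.1)).card *
        ω ⟨insert i.1 U, by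
            rw [card_insert_of_notMem (Finset.mem_compl.mp i.2)]; exact hU⟩
          (b - single n i.1) = 0)

/-- A Čech `k`-cochain for the standard cover: a `q`-form for every `(k+1)`-element set
of indices. -/
abbrev Cochain (n q k : ℕ) := {S : Finset (Fin (n + 1)) // S.card = k + 1} → Form n q

/-- A Čech cochain whose `S`-component is a section of `Ω^q(m)` over `U_S` for every
`S`. -/
def IsCochain (n q : ℕ) (m : ℤ) {k : ℕ} (ω : Cochain n q k) : Prop :=
  ∀ S, IsSection n q m S.1 (ω S)

/-- The Čech differential: `(dω)_{S} = ∑_{i ∈ S} (−1)^{#{j ∈ S | j < i}} ω_{S \ {i}}`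
(the restriction maps of the sheaf being inclusions of Laurent coefficient modules). -/
noncomputable def cechD {n q k : ℕ} (ω : Cochain n q k) : Cochain n q (k + 1) :=
  fun S => ∑ i ∈ S.1.attach,
    (-1 : ℂ) ^ (S.1.filter (fun j => j < i.1)).card •
      ω ⟨S.1.erase i.1, by rw [card_erase_of_mem i.2, S.2]; omega⟩

open scoped Classical

noncomputable section
variable {n : ℕ}

abbrev Exp (n : ℕ) := Fin (n + 1) → ℤ
abbrev RF (n : ℕ) := Finset (Fin (n + 1)) → Exp n → ℂ
abbrev RC (n : ℕ) := Finset (Fin (n + 1)) → Finset (Fin (n + 1)) → Exp n → ℂ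

def sgn (S : Finset (Fin (n + 1))) (i : Fin (n + 1)) : ℂ :=
  (-1) ^ (S.filter (fun j => j < i)).card

lemma sgn_insert {v : Fin (n + 1)} {S : Finset (Fin (n + 1))} (hv : v ∉ S) (i : Fin (n + 1)) :
    sgn (insert v S) i = (if v < i then -1 else 1) * sgn S i := by
  unfold sgn
  rw [filter_insert]
  split_ifs with h
  · rw [card_insert_of_notMem (fun hc => hv (mem_of_mem_filter v hc)), pow_succ]
    ring
  · ring

lemma iffac_sq (c : Prop) [Decidable c] : (if c then (-1:ℂ) else 1) * (if c then (-1:ℂ) else 1) = 1 := by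
  split_ifs <;> ring

lemma iffac_neg {i j : Fin (n + 1)} (h : i ≠ j) :
    (if i < j then (-1:ℂ) else 1) = -(if j < i then (-1:ℂ) else 1) := by
  rcases lt_or_gt_of_ne h with h' | h' <;> simp [h', asymm h']

lemma sgn_mul_self (S : Finset (Fin (n + 1))) (i : Fin (n + 1)) : sgn S i * sgn S i = 1 := by
  unfold sgn
  rw [← mul_pow, neg_mul_neg, one_mul, one_pow]

lemma sgn_insert_self {v : Fin (n + 1)} {S : Finset (Fin (n + 1))} (hv : v ∉ S) :
    sgn (insert v S) v = sgn S v := by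
  rw [sgn_insert hv, if_neg (lt_irrefl v), one_mul]

lemma sgn_erase {j : Fin (n + 1)} {S : Finset (Fin (n + 1))} (hj : j ∈ S) (i : Fin (n + 1)) :
    sgn (S.erase j) i = (if j < i then -1 else 1) * sgn S i := by
  have h1 : sgn S i = (if j < i then (-1:ℂ) else 1) * sgn (S.erase j) i := by
    conv_lhs => rw [← insert_erase hj]
    rw [sgn_insert (notMem_erase j S)]
  rw [h1, ← mul_assoc, iffac_sq, one_mul]

lemma sgn_erase_self {v : Fin (n + 1)} {S : Finset (Fin (n + 1))} (hv : v ∈ S) :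
    sgn (S.erase v) v = sgn S v := by
  rw [sgn_erase hv, if_neg (lt_irrefl v), one_mul]

lemma sgn_cross {S : Finset (Fin (n + 1))} {i v : Fin (n + 1)} (hi : i ∈ S) (hv : v ∉ S)
    (hne : i ≠ v) : sgn S i * sgn (S.erase i) v = -(sgn S v * sgn (insert v S) i) := by
  rw [sgn_erase hi, sgn_insert hv, iffac_neg hne]
  ring

lemma sgn_cross2 {T : Finset (Fin (n + 1))} {i j : Fin (n + 1)} (hi : i ∉ T) (hj : j ∉ T)
    (hne : i ≠ j) : sgn T i * sgn (insert i T) j = -(sgn T j * sgn (insert j T) i) := by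
  rw [sgn_insert hi, sgn_insert hj, iffac_neg hne]
  ring

def rawD (f : RF n) : RF n := fun T a =>
  ∑ j, if j ∈ T then sgn T j * (((a j : ℤ) + 1 : ℤ) : ℂ) * f (T.erase j) (a + single n j) else 0

def rawC (f : RF n) : RF n := fun T a =>
  ∑ i, if i ∉ T then sgn T i * f (insert i T) (a - single n i) else 0

lemma single_self (i : Fin (n + 1)) : single n i i = 1 := by simp [single]
lemma single_ne {i j : Fin (n + 1)} (h : i ≠ j) : single n j i = 0 := by
  simp [single, h]

/-- Cartan's identity at the raw level. -/
lemma raw_cartan (f : RF n) (T : Finset (Fin (n + 1))) (a : Exp n) :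
    rawC (rawD f) T a + rawD (rawC f) T a
      = (((∑ i, a i : ℤ) : ℂ) + (T.card : ℂ)) * f T a := by
  have hP : rawC (rawD f) T a = ∑ i, ∑ j,
      (if i ∉ T ∧ j ∈ insert i T then
        sgn T i * (sgn (insert i T) j * (((a - single n i) j + 1 : ℤ) : ℂ) *
          f ((insert i T).erase j) (a - single n i + single n j)) else 0) := by
    rw [rawC]
    refine Finset.sum_congr rfl fun i _ => ?_
    by_cases hi : i ∉ T
    · rw [if_pos hi, rawD, Finset.mul_sum]
      refine Finset.sum_congr rfl fun j _ => ?_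
      by_cases hj : j ∈ insert i T
      · rw [if_pos hj, if_pos ⟨hi, hj⟩]
      · rw [if_neg hj, mul_zero, if_neg (fun hc => hj hc.2)]
    · rw [if_neg hi]
      refine (Finset.sum_eq_zero fun j _ => ?_).symm
      rw [if_neg (fun hc => hi hc.1)]
  have hQ : rawD (rawC f) T a = ∑ i, ∑ j,
      (if j ∈ T ∧ i ∉ T.erase j then
        sgn T j * (((a j : ℤ) + 1 : ℤ) : ℂ) *
          (sgn (T.erase j) i * f (insert i (T.erase j)) (a + single n j - single n i)) else 0) := by
    rw [rawD, Finset.sum_comm]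
    refine Finset.sum_congr rfl fun j _ => ?_
    by_cases hj : j ∈ T
    · rw [if_pos hj, rawC, Finset.mul_sum]
      refine Finset.sum_congr rfl fun i _ => ?_
      by_cases hi : i ∉ T.erase j
      · rw [if_pos hi, if_pos ⟨hj, hi⟩]
      · rw [if_neg hi, mul_zero, if_neg (fun hc => hi hc.2)]
    · rw [if_neg hj]
      refine (Finset.sum_eq_zero fun i _ => ?_).symm
      rw [if_neg (fun hc => hj hc.1)]
  rw [hP, hQ, ← Finset.sum_add_distrib]
  have hsum : ∀ i : Fin (n + 1), (∑ j, (if i ∉ T ∧ j ∈ insert i T then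
        sgn T i * (sgn (insert i T) j * (((a - single n i) j + 1 : ℤ) : ℂ) *
          f ((insert i T).erase j) (a - single n i + single n j)) else 0))
      + (∑ j, (if j ∈ T ∧ i ∉ T.erase j then
        sgn T j * (((a j : ℤ) + 1 : ℤ) : ℂ) *
          (sgn (T.erase j) i * f (insert i (T.erase j)) (a + single n j - single n i)) else 0))
      = ((if i ∈ T then ((a i : ℤ) + 1 : ℂ) else (a i : ℂ))) * f T a := by
    intro i
    rw [← Finset.sum_add_distrib]
    have hterm : ∀ j, j ≠ i → ((if i ∉ T ∧ j ∈ insert i T then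
        sgn T i * (sgn (insert i T) j * (((a - single n i) j + 1 : ℤ) : ℂ) *
          f ((insert i T).erase j) (a - single n i + single n j)) else 0)
      + (if j ∈ T ∧ i ∉ T.erase j then
        sgn T j * (((a j : ℤ) + 1 : ℤ) : ℂ) *
          (sgn (T.erase j) i * f (insert i (T.erase j)) (a + single n j - single n i)) else 0)) = 0 := by
      intro j hji
      by_cases hi : i ∈ T
      · rw [if_neg (fun hc => hc.1 hi), if_neg (fun hc => hc.2 (mem_erase.mpr ⟨Ne.symm hji, hi⟩)), add_zero]
      · by_cases hj : j ∈ T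
        · rw [if_pos ⟨hi, mem_insert_of_mem hj⟩,
            if_pos ⟨hj, fun hc => hi (mem_of_mem_erase hc)⟩]
          have hset : (insert i T).erase j = insert i (T.erase j) :=
            Finset.erase_insert_of_ne (fun h => hji (h.symm))
          have hexp : a - single n i + single n j = a + single n j - single n i := by abel
          have hcoef : (((a - single n i) j + 1 : ℤ) : ℂ) = (((a j : ℤ) + 1 : ℤ) : ℂ) := by
            have : (a - single n i) j = a j := by
              simp [single, hji]
            rw [this]
          have hsgn := sgn_cross hj hi (fun h => hi (h ▸ hj))
          rw [hset, hexp, hcoef]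
          linear_combination ((((a j : ℤ) + 1 : ℤ) : ℂ) *
            f (insert i (T.erase j)) (a + single n j - single n i)) * hsgn
        · rw [if_neg (fun hc => hj (by rcases mem_insert.mp hc.2 with h | h; exact absurd h hji; exact h)),
            if_neg (fun hc => hj hc.1), add_zero]
    rw [Finset.sum_eq_single_of_mem i (mem_univ i) (fun j _ hj => hterm j hj)]
    by_cases hi : i ∈ T
    · rw [if_neg (fun hc => hc.1 hi), if_pos ⟨hi, notMem_erase i T⟩, if_pos hi, zero_add,
        insert_erase hi, sgn_erase_self hi]
      have : a + single n i - single n i = a := by abel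
      rw [this]
      push_cast
      linear_combination (((a i : ℂ) + 1) * f T a) * sgn_mul_self T i
    · rw [if_pos ⟨hi, mem_insert_self i T⟩,
        if_neg (fun hc => hi hc.1), if_neg hi, add_zero, erase_insert hi, sgn_insert_self hi]
      have he : a - single n i + single n i = a := by abel
      have hc2 : (((a - single n i) i + 1 : ℤ) : ℂ) = (a i : ℂ) := by
        have : (a - single n i) i = a i - 1 := by simp [single]
        rw [this]; push_cast; ring
      rw [he, hc2]
      linear_combination ((a i : ℂ) * f T a) * sgn_mul_self T i
  rw [Finset.sum_congr rfl fun i _ => hsum i, ← Finset.sum_mul]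
  congr 1
  have : ∀ i : Fin (n + 1), (if i ∈ T then ((a i : ℤ) + 1 : ℂ) else (a i : ℂ))
      = (a i : ℂ) + (if i ∈ T then (1 : ℂ) else 0) := by
    intro i; split_ifs <;> simp
  rw [Finset.sum_congr rfl fun i _ => this i, Finset.sum_add_distrib]
  congr 1
  · push_cast; rfl
  · rw [Finset.sum_boole]
    simp [Finset.filter_mem_eq_inter]

lemma sum_antisymm {F : Fin (n + 1) → Fin (n + 1) → ℂ} (h : ∀ i j, F i j = -(F j i)) :
    ∑ i, ∑ j, F i j = 0 := by
  have h2 : (∑ i, ∑ j, F i j) = -(∑ i, ∑ j, F i j) :=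
    calc ∑ i, ∑ j, F i j = ∑ j, ∑ i, F i j := Finset.sum_comm
      _ = ∑ j, ∑ i, -(F j i) :=
          Finset.sum_congr rfl fun j _ => Finset.sum_congr rfl fun i _ => h i j
      _ = -(∑ j, ∑ i, F j i) := by
          simp [Finset.sum_neg_distrib]
  have h3 : (2 : ℂ) * (∑ i, ∑ j, F i j) = 0 := by linear_combination h2
  exact (mul_eq_zero.mp h3).resolve_left two_ne_zero

lemma raw_CC (f : RF n) (T : Finset (Fin (n + 1))) (a : Exp n) : rawC (rawC f) T a = 0 := by
  have hA : rawC (rawC f) T a = ∑ i, ∑ j,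
      (if i ∉ T ∧ j ∉ insert i T then
        sgn T i * (sgn (insert i T) j *
          f (insert j (insert i T)) (a - single n i - single n j)) else 0) := by
    rw [rawC]
    refine Finset.sum_congr rfl fun i _ => ?_
    by_cases hi : i ∉ T
    · rw [if_pos hi, rawC, Finset.mul_sum]
      refine Finset.sum_congr rfl fun j _ => ?_
      by_cases hj : j ∉ insert i T
      · rw [if_pos hj, if_pos ⟨hi, hj⟩]
      · rw [if_neg hj, mul_zero, if_neg (fun hc => hj hc.2)]
    · rw [if_neg hi]
      refine (Finset.sum_eq_zero fun j _ => ?_).symm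
      rw [if_neg (fun hc => hi hc.1)]
  have hanti : ∀ i j : Fin (n + 1), (if i ∉ T ∧ j ∉ insert i T then
        sgn T i * (sgn (insert i T) j *
          f (insert j (insert i T)) (a - single n i - single n j)) else 0)
      = -(if j ∉ T ∧ i ∉ insert j T then
        sgn T j * (sgn (insert j T) i *
          f (insert i (insert j T)) (a - single n j - single n i)) else 0) := by
    intro i j
    by_cases hij : i = j
    · subst hij
      rw [if_neg (fun hc => hc.2 (mem_insert_self i T)), neg_zero]
    · by_cases hi : i ∉ T
      · by_cases hj : j ∉ T
        · rw [if_pos ⟨hi, by simp [Ne.symm hij, hj]⟩, if_pos ⟨hj, by simp [hij, hi]⟩]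
          have hset : insert j (insert i T) = insert i (insert j T) := Finset.insert_comm j i T
          have hexp : a - single n i - single n j = a - single n j - single n i := by abel
          have hsgn := sgn_cross2 hi hj hij
          rw [hset, hexp]
          linear_combination (f (insert i (insert j T)) (a - single n j - single n i)) * hsgn
        · rw [if_neg (fun hc => hc.2 (mem_insert_of_mem (not_not.mp hj))),
            if_neg (fun hc => hj hc.1), neg_zero]
      · rw [if_neg (fun hc => hi hc.1),
          if_neg (fun hc => hc.2 (mem_insert_of_mem (not_not.mp hi))), neg_zero]
  rw [hA]
  exact sum_antisymm hanti

def vsel (a : Exp n) : Fin (n + 1) := if h : ∃ i, 0 ≤ a i then h.choose else 0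

lemma vsel_nonneg {a : Exp n} (h : ∃ i, 0 ≤ a i) : 0 ≤ a (vsel a) := by
  rw [vsel, dif_pos h]; exact h.choose_spec

def rawCD (g : RC n) : RC n := fun S T a =>
  ∑ i, if i ∈ S then sgn S i * g (S.erase i) T a else 0

def rawH (g : RC n) : RC n := fun S T a =>
  if vsel a ∈ S then 0 else sgn S (vsel a) * g (insert (vsel a) S) T a

lemma raw_homotopy (g : RC n) (hg : ∀ S T a, rawCD g S T a = 0)
    (S T : Finset (Fin (n + 1))) (a : Exp n) : rawCD (rawH g) S T a = g S T a := by
  by_cases hvS : vsel a ∈ S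
  · rw [rawCD]
    have hterm : ∀ i : Fin (n + 1), (if i ∈ S then sgn S i * rawH g (S.erase i) T a else 0)
        = if i = vsel a then g S T a else 0 := by
      intro i
      by_cases hiv : i = vsel a
      · subst hiv
        rw [if_pos hvS, if_pos rfl, rawH, if_neg (notMem_erase _ S), insert_erase hvS,
          sgn_erase_self hvS, ← mul_assoc, sgn_mul_self, one_mul]
      · by_cases hiS : i ∈ S
        · rw [if_pos hiS, if_neg hiv, rawH,
            if_pos (mem_erase.mpr ⟨fun h => hiv h.symm, hvS⟩), mul_zero]
        · rw [if_neg hiS, if_neg hiv]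
    rw [Finset.sum_congr rfl fun i _ => hterm i, Finset.sum_ite_eq' univ (vsel a) _,
      if_pos (mem_univ _)]
  · have h0 := hg (insert (vsel a) S) T a
    rw [rawCD] at h0
    have hsplit : ∀ j : Fin (n + 1),
        (if j ∈ insert (vsel a) S then
          sgn (insert (vsel a) S) j * g ((insert (vsel a) S).erase j) T a else 0)
        = (if j = vsel a then sgn S (vsel a) * g S T a else 0)
          + (if j ∈ S then sgn (insert (vsel a) S) j * g (insert (vsel a) (S.erase j)) T a
            else 0) := by
      intro j
      by_cases hjv : j = vsel a
      · subst hjv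
        rw [if_pos (mem_insert_self _ S), if_pos rfl, if_neg hvS, add_zero, erase_insert hvS,
          sgn_insert_self hvS]
      · by_cases hjS : j ∈ S
        · rw [if_pos (mem_insert_of_mem hjS), if_neg hjv, zero_add, if_pos hjS,
            Finset.erase_insert_of_ne (fun h => hjv (h.symm))]
        · have hj' : j ∉ insert (vsel a) S := by simp [hjv, hjS]
          rw [if_neg hj', if_neg hjv, if_neg hjS, add_zero]
    rw [Finset.sum_congr rfl fun j _ => hsplit j, Finset.sum_add_distrib,
      Finset.sum_ite_eq' univ (vsel a) _, if_pos (mem_univ _)] at h0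
    rw [rawCD]
    have hterm : ∀ i : Fin (n + 1), (if i ∈ S then sgn S i * rawH g (S.erase i) T a else 0)
        = -(sgn S (vsel a)) *
          (if i ∈ S then sgn (insert (vsel a) S) i * g (insert (vsel a) (S.erase i)) T a
            else 0) := by
      intro i
      by_cases hiS : i ∈ S
      · rw [if_pos hiS, if_pos hiS, rawH,
          if_neg (fun hc => hvS (mem_of_mem_erase hc))]
        have hc := sgn_cross hiS hvS (fun h => hvS (h ▸ hiS))
        linear_combination (g (insert (vsel a) (S.erase i)) T a) * hc
      · rw [if_neg hiS, if_neg hiS, mul_zero]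
    rw [Finset.sum_congr rfl fun i _ => hterm i, ← Finset.mul_sum]
    have hE : (∑ j, if j ∈ S then
        sgn (insert (vsel a) S) j * g (insert (vsel a) (S.erase j)) T a else 0)
        = -(sgn S (vsel a) * g S T a) := by linear_combination h0
    rw [hE]
    linear_combination (g S T a) * sgn_mul_self S (vsel a)

/-- linearity of rawD -/
lemma rawD_lin (c : Fin (n + 1) → ℂ) (f : Fin (n + 1) → RF n) (T : Finset (Fin (n + 1)))
    (a : Exp n) : rawD (fun T a => ∑ i, c i * f i T a) T a = ∑ i, c i * rawD (f i) T a := by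
  have h1 : rawD (fun T a => ∑ i, c i * f i T a) T a
      = ∑ j, ∑ i, (if j ∈ T then
          c i * (sgn T j * (((a j : ℤ) + 1 : ℤ) : ℂ) * f i (T.erase j) (a + single n j))
        else 0) := by
    rw [rawD]
    refine Finset.sum_congr rfl fun j _ => ?_
    by_cases hj : j ∈ T
    · rw [if_pos hj, Finset.mul_sum]
      refine Finset.sum_congr rfl fun i _ => ?_
      rw [if_pos hj]; ring
    · rw [if_neg hj]
      exact (Finset.sum_eq_zero fun i _ => if_neg hj).symm
  rw [h1, Finset.sum_comm]
  refine Finset.sum_congr rfl fun i _ => ?_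
  rw [rawD, Finset.mul_sum]
  refine Finset.sum_congr rfl fun j _ => ?_
  split_ifs with h <;> ring

lemma rawC_lin (c : Fin (n + 1) → ℂ) (f : Fin (n + 1) → RF n) (T : Finset (Fin (n + 1)))
    (a : Exp n) : rawC (fun T a => ∑ i, c i * f i T a) T a = ∑ i, c i * rawC (f i) T a := by
  have h1 : rawC (fun T a => ∑ i, c i * f i T a) T a
      = ∑ j, ∑ i, (if j ∉ T then
          c i * (sgn T j * f i (insert j T) (a - single n j))
        else 0) := by
    rw [rawC]
    refine Finset.sum_congr rfl fun j _ => ?_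
    by_cases hj : j ∉ T
    · rw [if_pos hj, Finset.mul_sum]
      refine Finset.sum_congr rfl fun i _ => ?_
      rw [if_pos hj]; ring
    · rw [if_neg hj]
      exact (Finset.sum_eq_zero fun i _ => if_neg hj).symm
  rw [h1, Finset.sum_comm]
  refine Finset.sum_congr rfl fun i _ => ?_
  rw [rawC, Finset.mul_sum]
  refine Finset.sum_congr rfl fun j _ => ?_
  split_ifs with h <;> ring

lemma rawD_smul (c : ℂ) (f : RF n) (T : Finset (Fin (n + 1))) (a : Exp n) :
    rawD (fun T a => c * f T a) T a = c * rawD f T a := by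
  rw [rawD, rawD, Finset.mul_sum]
  refine Finset.sum_congr rfl fun j _ => ?_
  split_ifs with h <;> ring

lemma rawC_smul (c : ℂ) (f : RF n) (T : Finset (Fin (n + 1))) (a : Exp n) :
    rawC (fun T a => c * f T a) T a = c * rawC f T a := by
  rw [rawC, rawC, Finset.mul_sum]
  refine Finset.sum_congr rfl fun j _ => ?_
  split_ifs with h <;> ring

lemma rawD_zero (f : RF n) (hf : ∀ T a, f T a = 0) (T : Finset (Fin (n + 1))) (a : Exp n) :
    rawD f T a = 0 := by
  rw [rawD]
  refine Finset.sum_eq_zero fun j _ => ?_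
  split_ifs with h <;> simp [hf]

lemma rawC_zero (f : RF n) (hf : ∀ T a, f T a = 0) (T : Finset (Fin (n + 1))) (a : Exp n) :
    rawC f T a = 0 := by
  rw [rawC]
  refine Finset.sum_eq_zero fun j _ => ?_
  split_ifs with h <;> simp [hf]

/-- support/degree condition for a raw form. -/
def SuppOK (S : Finset (Fin (n + 1))) (d : ℤ) (f : RF n) : Prop :=
  ∀ T a, f T a ≠ 0 → (∀ i ∉ S, 0 ≤ a i) ∧ (∑ i, a i) = d

lemma sum_single (j : Fin (n + 1)) : (∑ i, single n j i) = 1 := by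
  have h : ∀ i : Fin (n + 1), single n j i = if i = j then (1:ℤ) else 0 := fun i => rfl
  rw [Finset.sum_congr rfl fun i _ => h i, Finset.sum_ite_eq' univ j (fun _ => (1:ℤ))]
  simp

lemma suppOK_rawD {S : Finset (Fin (n + 1))} {d : ℤ} {f : RF n} (hf : SuppOK S d f) :
    SuppOK S (d - 1) (rawD f) := by
  intro T a hne
  rw [rawD] at hne
  obtain ⟨j, _, hj⟩ := Finset.exists_ne_zero_of_sum_ne_zero hne
  have hjT : j ∈ T := by by_contra hc; rw [if_neg hc] at hj; exact hj rfl
  rw [if_pos hjT] at hj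
  have hcoef : ((a j : ℤ) + 1 : ℤ) ≠ 0 := by
    intro hc
    rw [hc] at hj; simp at hj
  have hfne : f (T.erase j) (a + single n j) ≠ 0 := by
    intro hc; rw [hc, mul_zero] at hj; exact hj rfl
  obtain ⟨hsupp, hdeg⟩ := hf _ _ hfne
  constructor
  · intro i hiS
    have h4 : (0:ℤ) ≤ a i + single n j i := hsupp i hiS
    by_cases hij : i = j
    · subst hij
      rw [single_self] at h4
      omega
    · rw [single_ne hij] at h4
      omega
  · have h5 : (∑ i, (a i + single n j i)) = d := hdeg
    rw [Finset.sum_add_distrib, sum_single] at h5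
    omega

lemma suppOK_rawC {S : Finset (Fin (n + 1))} {d : ℤ} {f : RF n} (hf : SuppOK S d f) :
    SuppOK S (d + 1) (rawC f) := by
  intro T a hne
  rw [rawC] at hne
  obtain ⟨j, _, hj⟩ := Finset.exists_ne_zero_of_sum_ne_zero hne
  have hjT : j ∉ T := by by_contra hc; rw [if_neg (not_not.mpr hc)] at hj; exact hj rfl
  rw [if_pos hjT] at hj
  have hfne : f (insert j T) (a - single n j) ≠ 0 := by
    intro hc; rw [hc, mul_zero] at hj; exact hj rfl
  obtain ⟨hsupp, hdeg⟩ := hf _ _ hfne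
  constructor
  · intro i hiS
    have h4 : (0:ℤ) ≤ a i - single n j i := hsupp i hiS
    by_cases hij : i = j
    · subst hij
      rw [single_self] at h4
      omega
    · rw [single_ne hij] at h4
      omega
  · have h5 : (∑ i, (a i - single n j i)) = d := hdeg
    rw [Finset.sum_sub_distrib, sum_single] at h5
    omega

lemma single_add_self (a : Exp n) (j : Fin (n + 1)) : (a + single n j) j = a j + 1 := by
  simp [single]

def shiftScale (c : Exp n) (w : Exp n → ℂ) (f : Laurent n) : Laurent n :=
  f.sum fun b v => Finsupp.single (b + c) (w b * v)

lemma shiftScale_apply (c : Exp n) (w : Exp n → ℂ) (f : Laurent n) (a : Exp n) :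
    shiftScale c w f a = w (a - c) * f (a - c) := by
  rw [shiftScale, Finsupp.sum_apply, Finsupp.sum]
  have hterm : ∀ b ∈ f.support, (Finsupp.single (b + c) (w b * f b) : Laurent n) a
      = if b = a - c then w b * f b else 0 := by
    intro b _
    rw [Finsupp.single_apply]
    have hiff : (b + c = a) ↔ (b = a - c) := eq_sub_iff_add_eq.symm
    rw [if_congr hiff rfl rfl]
  rw [Finset.sum_congr rfl hterm, Finset.sum_ite_eq' f.support (a - c) _]
  by_cases h : a - c ∈ f.support
  · rw [if_pos h]
  · rw [if_neg h, Finsupp.notMem_support_iff.mp h, mul_zero]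

def rext {q : ℕ} (φ : Form n q) : RF n := fun T a =>
  if h : T.card = q then φ ⟨T, h⟩ a else 0

noncomputable def derivF {q : ℕ} (φ : Form n q) : Form n (q + 1) := fun T =>
  ∑ j ∈ T.1.attach,
    sgn T.1 j.1 • shiftScale (-(single n j.1)) (fun b => ((b j.1 : ℤ) : ℂ))
      (φ ⟨T.1.erase j.1, by rw [card_erase_of_mem j.2, T.2]; omega⟩)

noncomputable def contrF {q : ℕ} (ψ : Form n (q + 1)) : Form n q := fun T =>
  ∑ i ∈ T.1ᶜ.attach,
    sgn T.1 i.1 • shiftScale (single n i.1) (fun _ => (1 : ℂ))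
      (ψ ⟨insert i.1 T.1, by rw [card_insert_of_notMem (Finset.mem_compl.mp i.2), T.2]⟩)

lemma rext_derivF {q : ℕ} (φ : Form n q) : rext (derivF φ) = rawD (rext φ) := by
  funext T a
  by_cases hT : T.card = q + 1
  · simp only [rext]
    rw [dif_pos hT]
    show derivF φ ⟨T, hT⟩ a = _
    rw [derivF, Finsupp.finset_sum_apply]
    set F : Fin (n + 1) → ℂ := fun i =>
      if h : (T.erase i).card = q then
        sgn T i * (((a i : ℤ) + 1 : ℤ) : ℂ) * (φ ⟨T.erase i, h⟩ (a + single n i)) else 0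
      with hF
    have hstep : (∑ j ∈ T.attach, (sgn T j.1 •
        shiftScale (-(single n j.1)) (fun b => ((b j.1 : ℤ) : ℂ))
          (φ ⟨T.erase j.1, by rw [card_erase_of_mem j.2, hT]; omega⟩) : Laurent n) a)
        = ∑ j ∈ T.attach, F j.1 := by
      refine Finset.sum_congr rfl fun j _ => ?_
      have hcard : (T.erase j.1).card = q := by
        rw [card_erase_of_mem j.2, hT]; omega
      simp only [hF]
      rw [dif_pos hcard, Finsupp.smul_apply, shiftScale_apply, smul_eq_mul]
      have h1 : a - -(single n j.1) = a + single n j.1 := by abel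
      rw [h1, single_add_self]
      push_cast
      ring
    rw [hstep, Finset.sum_attach T F, rawD]
    have hstep2 : ∀ i : Fin (n + 1),
        (if i ∈ T then sgn T i * (((a i : ℤ) + 1 : ℤ) : ℂ) *
          rext φ (T.erase i) (a + single n i) else 0)
        = if i ∈ T then F i else 0 := by
      intro i
      by_cases hi : i ∈ T
      · rw [if_pos hi, if_pos hi]
        have hcard : (T.erase i).card = q := by rw [card_erase_of_mem hi, hT]; omega
        simp only [hF, rext]
        rw [dif_pos hcard, dif_pos hcard]
      · rw [if_neg hi, if_neg hi]
    rw [Finset.sum_congr rfl fun i _ => hstep2 i, Finset.sum_ite_mem, univ_inter]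
  · simp only [rext]
    rw [dif_neg hT, rawD]
    refine (Finset.sum_eq_zero fun j _ => ?_).symm
    by_cases hj : j ∈ T
    · rw [if_pos hj]
      have hcard : (T.erase j).card ≠ q := by
        rw [card_erase_of_mem hj]
        have := Finset.card_pos.mpr ⟨j, hj⟩
        omega
      simp only [rext]
      rw [dif_neg hcard, mul_zero]
    · rw [if_neg hj]

lemma rext_contrF {q : ℕ} (ψ : Form n (q + 1)) : rext (contrF ψ) = rawC (rext ψ) := by
  funext T a
  by_cases hT : T.card = q
  · simp only [rext]
    rw [dif_pos hT]
    show contrF ψ ⟨T, hT⟩ a = _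
    rw [contrF, Finsupp.finset_sum_apply]
    set F : Fin (n + 1) → ℂ := fun i =>
      if h : (insert i T).card = q + 1 then
        sgn T i * (ψ ⟨insert i T, h⟩ (a - single n i)) else 0
      with hF
    have hstep : (∑ i ∈ Tᶜ.attach, (sgn T i.1 •
        shiftScale (single n i.1) (fun _ => (1 : ℂ))
          (ψ ⟨insert i.1 T, by rw [card_insert_of_notMem (Finset.mem_compl.mp i.2), hT]⟩) : Laurent n) a)
        = ∑ i ∈ Tᶜ.attach, F i.1 := by
      refine Finset.sum_congr rfl fun i _ => ?_
      have hcard : (insert i.1 T).card = q + 1 := by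
        rw [card_insert_of_notMem (Finset.mem_compl.mp i.2), hT]
      simp only [hF]
      rw [dif_pos hcard, Finsupp.smul_apply, shiftScale_apply, smul_eq_mul, one_mul]
    rw [hstep, Finset.sum_attach Tᶜ F, rawC]
    have hstep2 : ∀ i : Fin (n + 1),
        (if i ∉ T then sgn T i * rext ψ (insert i T) (a - single n i) else 0)
        = if i ∈ Tᶜ then F i else 0 := by
      intro i
      by_cases hi : i ∈ T
      · rw [if_neg (not_not.mpr hi), if_neg (fun hc => (Finset.mem_compl.mp hc) hi)]
      · rw [if_pos hi, if_pos (Finset.mem_compl.mpr hi)]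
        have hcard : (insert i T).card = q + 1 := by
          rw [card_insert_of_notMem hi, hT]
        simp only [hF, rext]
        rw [dif_pos hcard, dif_pos hcard]
    rw [Finset.sum_congr rfl fun i _ => hstep2 i, Finset.sum_ite_mem, univ_inter]
  · simp only [rext]
    rw [dif_neg hT, rawC]
    refine (Finset.sum_eq_zero fun i _ => ?_).symm
    by_cases hi : i ∈ T
    · rw [if_neg (not_not.mpr hi)]
    · rw [if_pos hi]
      have hcard : (insert i T).card ≠ q + 1 := by
        rw [card_insert_of_notMem hi]
        omega
      simp only [rext]
      rw [dif_neg hcard, mul_zero]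

def rc {q k : ℕ} (ω : Cochain n q k) : RC n := fun S T a =>
  if h : S.card = k + 1 ∧ T.card = q then ω ⟨S, h.1⟩ ⟨T, h.2⟩ a else 0

lemma rc_apply {q k : ℕ} (ω : Cochain n q k) (S : {S : Finset (Fin (n + 1)) // S.card = k + 1})
    (T : Finset (Fin (n + 1))) (a : Exp n) : rc ω S.1 T a = rext (ω S) T a := by
  simp only [rc, rext]
  by_cases hT : T.card = q
  · rw [dif_pos ⟨S.2, hT⟩, dif_pos hT]
  · rw [dif_neg (fun hc => hT hc.2), dif_neg hT]

lemma rc_inj {q k : ℕ} (ω ω' : Cochain n q k) (h : ∀ S T a, rc ω S T a = rc ω' S T a) :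
    ω = ω' := by
  funext S T
  ext a
  have h1 := h S.1 T.1 a
  simp only [rc] at h1
  rw [dif_pos ⟨S.2, T.2⟩, dif_pos ⟨S.2, T.2⟩] at h1
  exact h1

lemma rc_cechD {q k : ℕ} (ω : Cochain n q k) : rc (cechD ω) = rawCD (rc ω) := by
  funext S T a
  by_cases hS : S.card = k + 1 + 1 ∧ T.card = q
  · obtain ⟨hS1, hT⟩ := hS
    simp only [rc]
    rw [dif_pos ⟨hS1, hT⟩]
    show (cechD ω ⟨S, hS1⟩) ⟨T, hT⟩ a = _
    rw [cechD, Finset.sum_apply, Finsupp.finset_sum_apply]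
    set F : Fin (n + 1) → ℂ := fun i =>
      if h : (S.erase i).card = k + 1 then sgn S i * (ω ⟨S.erase i, h⟩ ⟨T, hT⟩ a) else 0
      with hF
    have hstep : (∑ i ∈ S.attach, ((-1 : ℂ) ^ (S.filter (fun j => j < i.1)).card •
        ω ⟨S.erase i.1, by rw [card_erase_of_mem i.2, hS1]; omega⟩ : Form n q) ⟨T, hT⟩ a)
        = ∑ i ∈ S.attach, F i.1 := by
      refine Finset.sum_congr rfl fun i _ => ?_
      have hcard : (S.erase i.1).card = k + 1 := by
        rw [card_erase_of_mem i.2, hS1]; omega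
      simp only [hF]
      rw [dif_pos hcard, Pi.smul_apply, Finsupp.smul_apply, smul_eq_mul]
      rfl
    rw [hstep, Finset.sum_attach S F, rawCD]
    have hstep2 : ∀ i : Fin (n + 1),
        (if i ∈ S then sgn S i * rc ω (S.erase i) T a else 0)
        = if i ∈ S then F i else 0 := by
      intro i
      by_cases hi : i ∈ S
      · rw [if_pos hi, if_pos hi]
        have hcard : (S.erase i).card = k + 1 := by rw [card_erase_of_mem hi, hS1]; omega
        simp only [hF, rc]
        rw [dif_pos ⟨hcard, hT⟩, dif_pos hcard]
      · rw [if_neg hi, if_neg hi]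
    rw [Finset.sum_congr rfl fun i _ => hstep2 i, Finset.sum_ite_mem, univ_inter]
  · simp only [rc]
    rw [dif_neg hS, rawCD]
    refine (Finset.sum_eq_zero fun i _ => ?_).symm
    by_cases hi : i ∈ S
    · rw [if_pos hi]
      have hrc : rc ω (S.erase i) T a = 0 := by
        simp only [rc]
        rw [dif_neg]
        intro hc
        apply hS
        refine ⟨?_, hc.2⟩
        have h1 := hc.1
        have h2 := Finset.card_pos.mpr ⟨i, hi⟩
        rw [card_erase_of_mem hi] at h1
        omega
      rw [hrc, mul_zero]
    · rw [if_neg hi]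

noncomputable def hcochain {q k : ℕ} (ω : Cochain n q (k + 1)) : Cochain n q k := fun S T =>
  ∑ v : Fin (n + 1), if hv : v ∈ S.1 then 0 else
    sgn S.1 v • Finsupp.filter (fun b => vsel b = v)
      (ω ⟨insert v S.1, by rw [card_insert_of_notMem hv, S.2]⟩ T)

lemma rext_hcochain {q k : ℕ} (ω : Cochain n q (k + 1))
    (S : {S : Finset (Fin (n + 1)) // S.card = k + 1}) :
    rext (hcochain ω S) = fun T a => rawH (rc ω) S.1 T a := by
  funext T a
  by_cases hT : T.card = q
  · simp only [rext]
    rw [dif_pos hT]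
    show hcochain ω S ⟨T, hT⟩ a = _
    rw [hcochain, Finsupp.finset_sum_apply]
    have hterm : ∀ v : Fin (n + 1),
        ((if hv : v ∈ S.1 then 0 else
          sgn S.1 v • Finsupp.filter (fun b => vsel b = v)
            (ω ⟨insert v S.1, by rw [card_insert_of_notMem hv, S.2]⟩ ⟨T, hT⟩)) : Laurent n) a
        = if v = vsel a then rawH (rc ω) S.1 T a else 0 := by
      intro v
      by_cases hvv : v = vsel a
      · rw [if_pos hvv, rawH, ← hvv]
        by_cases hv : v ∈ S.1
        · rw [dif_pos hv, if_pos hv]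
          rfl
        · rw [dif_neg hv, if_neg hv, Finsupp.smul_apply, Finsupp.filter_apply,
            if_pos hvv.symm, smul_eq_mul]
          have hcard : (insert v S.1).card = k + 1 + 1 ∧ T.card = q := by
            rw [card_insert_of_notMem hv, S.2]
            exact ⟨rfl, hT⟩
          simp only [rc]
          rw [dif_pos hcard]
      · by_cases hv : v ∈ S.1
        · rw [dif_pos hv]
          rw [if_neg hvv]
          rfl
        · rw [dif_neg hv, if_neg hvv, Finsupp.smul_apply, Finsupp.filter_apply,
            if_neg (fun hc => hvv hc.symm), smul_eq_mul, mul_zero]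
    rw [Finset.sum_congr rfl fun v _ => hterm v, Fintype.sum_ite_eq' (vsel a)]
  · simp only [rext]
    rw [dif_neg hT]
    symm
    rw [rawH]
    by_cases hv : vsel a ∈ S.1
    · rw [if_pos hv]
    · rw [if_neg hv]
      simp only [rc]
      rw [dif_neg (fun hc => hT hc.2), mul_zero]

lemma rext_smul {q : ℕ} (c : ℂ) (φ : Form n q) :
    rext (c • φ) = fun T a => c * rext φ T a := by
  funext T a
  simp only [rext]
  split_ifs with h
  · rw [Pi.smul_apply, Finsupp.smul_apply, smul_eq_mul]
  · rw [mul_zero]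

lemma euler_sum_eq {q : ℕ} (φ : Form n q) (U : Finset (Fin (n + 1))) (hU : U.card + 1 = q)
    (b : Exp n) :
    (∑ i ∈ Uᶜ.attach, (-1 : ℂ) ^ (U.filter (fun j => j < i.1)).card *
        φ ⟨insert i.1 U, by rw [card_insert_of_notMem (Finset.mem_compl.mp i.2)]; exact hU⟩
          (b - single n i.1))
      = rawC (rext φ) U b := by
  set F : Fin (n + 1) → ℂ := fun i =>
    if h : (insert i U).card = q then sgn U i * (φ ⟨insert i U, h⟩ (b - single n i)) else 0
    with hF
  have hstep : (∑ i ∈ Uᶜ.attach, (-1 : ℂ) ^ (U.filter (fun j => j < i.1)).card *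
        φ ⟨insert i.1 U, by rw [card_insert_of_notMem (Finset.mem_compl.mp i.2)]; exact hU⟩
          (b - single n i.1))
      = ∑ i ∈ Uᶜ.attach, F i.1 := by
    refine Finset.sum_congr rfl fun i _ => ?_
    have hcard : (insert i.1 U).card = q := by
      rw [card_insert_of_notMem (Finset.mem_compl.mp i.2)]; exact hU
    simp only [hF]
    rw [dif_pos hcard]
    rfl
  rw [hstep, Finset.sum_attach Uᶜ F, rawC]
  have hstep2 : ∀ i : Fin (n + 1),
      (if i ∉ U then sgn U i * rext φ (insert i U) (b - single n i) else 0)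
      = if i ∈ Uᶜ then F i else 0 := by
    intro i
    by_cases hi : i ∈ U
    · rw [if_neg (not_not.mpr hi), if_neg (fun hc => (Finset.mem_compl.mp hc) hi)]
    · rw [if_pos hi, if_pos (Finset.mem_compl.mpr hi)]
      have hcard : (insert i U).card = q := by
        rw [card_insert_of_notMem hi]; exact hU
      simp only [hF, rext]
      rw [dif_pos hcard, dif_pos hcard]
  rw [Finset.sum_congr rfl fun i _ => hstep2 i, Finset.sum_ite_mem, univ_inter]

lemma rawC_eq_zero_of_isSection {q : ℕ} {m : ℤ} {S : Finset (Fin (n + 1))} {φ : Form n q}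
    (hs : IsSection n q m S φ) : ∀ U b, rawC (rext φ) U b = 0 := by
  intro U b
  by_cases hU : U.card + 1 = q
  · exact (euler_sum_eq φ U hU b).symm.trans (hs.2 U hU b)
  · rw [rawC]
    refine Finset.sum_eq_zero fun i _ => ?_
    by_cases hi : i ∈ U
    · rw [if_neg (not_not.mpr hi)]
    · rw [if_pos hi]
      simp only [rext]
      rw [dif_neg (by rw [card_insert_of_notMem hi]; omega), mul_zero]

lemma isSection_of {q : ℕ} (m : ℤ) (S : Finset (Fin (n + 1))) (φ : Form n q)
    (h1 : SuppOK S (m - q) (rext φ)) (h2 : ∀ U b, rawC (rext φ) U b = 0) :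
    IsSection n q m S φ := by
  constructor
  · intro T a hne
    refine h1 T.1 a ?_
    simp only [rext]
    rw [dif_pos T.2]
    exact hne
  · intro U hU b
    exact (euler_sum_eq φ U hU b).trans (h2 U b)

lemma exists_nonneg_coord {a : Exp n} {d : ℤ} (hd : -(n : ℤ) ≤ d) (hsum : ∑ i, a i = d) :
    ∃ i, 0 ≤ a i := by
  by_contra hc
  push_neg at hc
  have h2 : (∑ i, a i) ≤ ∑ _i : Fin (n + 1), (-1 : ℤ) :=
    Finset.sum_le_sum (fun i _ => by have := hc i; omega)
  rw [Finset.sum_const, card_univ, Fintype.card_fin, nsmul_eq_mul] at h2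
  rw [hsum] at h2
  push_cast at h2
  omega

noncomputable def etaC {q k : ℕ} (p : ℕ) (ω : Cochain n q (k + 1)) : Cochain n q k :=
  fun S => (((-(p : ℤ)) : ℤ) : ℂ)⁻¹ • contrF (derivF (hcochain ω S))

end

/-- **Bott vanishing**: for `p ≥ 1` and `p + q ≤ n`, the sheaf `Ω^q_{ℙⁿ}(−p)` has
vanishing cohomology in all degrees: its Čech cohomology for the standard affine cover
vanishes, i.e. `H⁰` (the kernel of the first Čech differential, the global sections)
is zero and every Čech cocycle of positive degree is a coboundary. -/
theorem bott_vanishing (n p q : ℕ) (hp : 1 ≤ p) (hpq : p + q ≤ n) :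
    (∀ ω : Cochain n q 0, IsCochain n q (-(p : ℤ)) ω → cechD ω = 0 → ω = 0) ∧
    (∀ k : ℕ, ∀ ω : Cochain n q (k + 1), IsCochain n q (-(p : ℤ)) ω → cechD ω = 0 →
      ∃ η : Cochain n q k, IsCochain n q (-(p : ℤ)) η ∧ cechD η = ω) := by
  have hmne : (((-(p : ℤ)) : ℤ) : ℂ) ≠ 0 := by
    simp only [ne_eq, Int.cast_eq_zero]
    omega
  constructor
  · -- H⁰ vanishing
    intro ω hω hd
    have hzero : ∀ S T a, rawCD (rc ω) S T a = 0 := by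
      intro S T a
      have h1 : rc (cechD ω) S T a = rawCD (rc ω) S T a := by rw [rc_cechD]
      rw [← h1, hd]
      simp [rc]
    funext S T
    ext a
    by_contra hne
    obtain ⟨i, hi⟩ := Finset.card_eq_one.mp S.2
    have hn1 : 1 ≤ n := le_trans (by omega) hpq
    obtain ⟨j, hj⟩ : ∃ j : Fin (n + 1), j ≠ i := by
      by_cases h : i = ⟨0, by omega⟩
      · refine ⟨⟨1, by omega⟩, ?_⟩
        rw [h]
        simp [Fin.ext_iff]
      · exact ⟨⟨0, by omega⟩, fun hc => h hc.symm⟩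
    have hjS : j ∉ ({i} : Finset (Fin (n + 1))) := by simp [hj]
    have h3 := hzero (insert j {i}) T.1 a
    rw [rawCD, Finset.sum_ite_mem, univ_inter, Finset.sum_insert hjS,
      Finset.sum_singleton] at h3
    have hej : Finset.erase (insert j ({i} : Finset (Fin (n + 1)))) j = {i} :=
      erase_insert hjS
    have hei : Finset.erase (insert j ({i} : Finset (Fin (n + 1)))) i = {j} := by
      rw [Finset.erase_insert_of_ne hj]
      simp
    rw [hej, hei] at h3
    have hvi : rc ω {i} T.1 a = ω S T a := by
      simp only [rc]
      rw [dif_pos ⟨card_singleton i, T.2⟩]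
      have hSeq : (⟨{i}, card_singleton i⟩ : {S : Finset (Fin (n + 1)) // S.card = 0 + 1}) = S :=
        Subtype.ext hi.symm
      rw [hSeq]
    have hωj : ω ⟨{j}, card_singleton j⟩ T a ≠ 0 := by
      intro hc
      have hvj : rc ω {j} T.1 a = 0 := by
        simp only [rc]
        rw [dif_pos ⟨card_singleton j, T.2⟩]
        exact hc
      rw [hvj, mul_zero, add_zero, hvi] at h3
      have hsne : sgn (insert j {i}) j ≠ 0 := by
        unfold sgn
        exact pow_ne_zero _ (by norm_num)
      rcases mul_eq_zero.mp h3 with h | h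
      · exact hsne h
      · exact hne h
    obtain ⟨hsuppi, hdegi⟩ := (hω S).1 T a hne
    obtain ⟨hsuppj, hdegj⟩ := (hω ⟨{j}, card_singleton j⟩).1 T a hωj
    have hall : ∀ l, 0 ≤ a l := by
      intro l
      by_cases hl : l = i
      · refine hsuppj l ?_
        subst hl
        exact fun hc => hj ((mem_singleton.mp hc).symm)
      · refine hsuppi l ?_
        rw [hi]
        exact fun hc => hl (mem_singleton.mp hc)
    have hs : (0 : ℤ) ≤ ∑ l, a l := Finset.sum_nonneg fun l _ => hall l
    rw [hdegi] at hs
    omega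
  · -- positive degrees
    intro k ω hω hd
    have hzero : ∀ S T a, rawCD (rc ω) S T a = 0 := by
      intro S T a
      have h1 : rc (cechD ω) S T a = rawCD (rc ω) S T a := by rw [rc_cechD]
      rw [← h1, hd]
      simp [rc]
    have hrc_eta : ∀ S T a, rc (etaC p ω) S T a
        = (((-(p : ℤ)) : ℤ) : ℂ)⁻¹ * rawC (rawD (rawH (rc ω) S)) T a := by
      intro S T a
      by_cases hS : S.card = k + 1
      · calc rc (etaC p ω) S T a = rext (etaC p ω ⟨S, hS⟩) T a := rc_apply (etaC p ω) ⟨S, hS⟩ T a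
          _ = (((-(p : ℤ)) : ℤ) : ℂ)⁻¹ * rext (contrF (derivF (hcochain ω ⟨S, hS⟩))) T a := by
              exact congrFun (congrFun (rext_smul ((((-(p : ℤ)) : ℤ) : ℂ))⁻¹
                (contrF (derivF (hcochain ω ⟨S, hS⟩)))) T) a
          _ = (((-(p : ℤ)) : ℤ) : ℂ)⁻¹ * rawC (rext (derivF (hcochain ω ⟨S, hS⟩))) T a := by
              rw [rext_contrF]
          _ = (((-(p : ℤ)) : ℤ) : ℂ)⁻¹ * rawC (rawD (rext (hcochain ω ⟨S, hS⟩))) T a := by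
              rw [rext_derivF]
          _ = (((-(p : ℤ)) : ℤ) : ℂ)⁻¹ * rawC (rawD (fun T a => rawH (rc ω)
                (⟨S, hS⟩ : {S : Finset (Fin (n + 1)) // S.card = k + 1}).1 T a)) T a := by
              rw [rext_hcochain]
          _ = (((-(p : ℤ)) : ℤ) : ℂ)⁻¹ * rawC (rawD (rawH (rc ω) S)) T a := rfl
      · have hH0 : ∀ T a, rawH (rc ω) S T a = 0 := by
          intro T a
          rw [rawH]
          by_cases hv : vsel a ∈ S
          · rw [if_pos hv]
          · rw [if_neg hv]
            have h2 : rc ω (insert (vsel a) S) T a = 0 := by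
              simp only [rc]
              rw [dif_neg]
              intro hc
              apply hS
              have h3 := hc.1
              rw [card_insert_of_notMem hv] at h3
              omega
            rw [h2, mul_zero]
        have h2 : rawC (rawD (rawH (rc ω) S)) T a = 0 :=
          rawC_zero _ (fun T a => rawD_zero _ hH0 T a) T a
        simp only [rc]
        rw [dif_neg (fun hc => hS hc.1), h2, mul_zero]
    refine ⟨etaC p ω, ?_, ?_⟩
    · -- IsCochain
      intro S
      have hbase : SuppOK S.1 (-(p : ℤ) - q) (fun T a => rawH (rc ω) S.1 T a) := by
        intro T a hne
        simp only [rawH] at hne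
        have hv : vsel a ∉ S.1 := fun hc => hne (by rw [if_pos hc])
        rw [if_neg hv] at hne
        have hrc : rc ω (insert (vsel a) S.1) T a ≠ 0 := fun hc => hne (by rw [hc, mul_zero])
        have hcard : (insert (vsel a) S.1).card = k + 1 + 1 ∧ T.card = q := by
          by_contra hc
          exact hrc (by simp only [rc]; rw [dif_neg hc])
        have hval : ω ⟨insert (vsel a) S.1, hcard.1⟩ ⟨T, hcard.2⟩ a ≠ 0 := by
          simp only [rc] at hrc
          rw [dif_pos hcard] at hrc
          exact hrc
        obtain ⟨hsupp, hdeg⟩ := (hω ⟨insert (vsel a) S.1, hcard.1⟩).1 ⟨T, hcard.2⟩ a hval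
        constructor
        · intro i hiS
          by_cases hiv : i = vsel a
          · subst hiv
            refine vsel_nonneg (exists_nonneg_coord ?_ hdeg)
            have hpq' : (p : ℤ) + q ≤ n := by exact_mod_cast hpq
            omega
          · exact hsupp i (by simp [hiv, hiS])
        · exact hdeg
      have hsupp2 := suppOK_rawC (suppOK_rawD hbase)
      have hd2 : -(p : ℤ) - q - 1 + 1 = -(p : ℤ) - q := by ring
      rw [hd2] at hsupp2
      have hreqn : ∀ T a, rext (etaC p ω S) T a
          = (((-(p : ℤ)) : ℤ) : ℂ)⁻¹ * rawC (rawD (rawH (rc ω) S.1)) T a := by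
        intro T a
        rw [← rc_apply (etaC p ω) S T a]
        exact hrc_eta S.1 T a
      refine isSection_of _ _ _ ?_ ?_
      · intro T a hne
        rw [hreqn T a] at hne
        have hX : rawC (rawD (rawH (rc ω) S.1)) T a ≠ 0 := fun hc => hne (by rw [hc, mul_zero])
        exact hsupp2 T a hX
      · intro U b
        have hfun : rext (etaC p ω S)
            = fun T a => (((-(p : ℤ)) : ℤ) : ℂ)⁻¹ * rawC (rawD (rawH (rc ω) S.1)) T a :=
          funext fun T => funext fun a => hreqn T a
        rw [hfun, rawC_smul]
        rw [show rawC (fun T a => rawC (rawD (rawH (rc ω) S.1)) T a) U b = 0 from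
          raw_CC (rawD (rawH (rc ω) S.1)) U b, mul_zero]
    · -- cechD (etaC p ω) = ω
      apply rc_inj
      intro S T a
      have h1 : rc (cechD (etaC p ω)) S T a = rawCD (rc (etaC p ω)) S T a := by rw [rc_cechD]
      rw [h1]
      have hstep : rawCD (rc (etaC p ω)) S T a
          = ∑ i, ((((-(p : ℤ)) : ℤ) : ℂ)⁻¹ * (if i ∈ S then sgn S i else 0))
              * rawC (rawD (rawH (rc ω) (S.erase i))) T a := by
        rw [rawCD]
        refine Finset.sum_congr rfl fun i _ => ?_
        by_cases hi : i ∈ S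
        · rw [if_pos hi, if_pos hi, hrc_eta (S.erase i) T a]
          ring
        · rw [if_neg hi, if_neg hi, mul_zero, zero_mul]
      have hcomb : (∑ i, ((((-(p : ℤ)) : ℤ) : ℂ)⁻¹ * (if i ∈ S then sgn S i else 0))
              * rawC (rawD (rawH (rc ω) (S.erase i))) T a)
          = rawC (rawD (fun T a => ∑ i,
              ((((-(p : ℤ)) : ℤ) : ℂ)⁻¹ * (if i ∈ S then sgn S i else 0))
              * rawH (rc ω) (S.erase i) T a)) T a := by
        have hDlin : rawD (fun T a => ∑ i,
              ((((-(p : ℤ)) : ℤ) : ℂ)⁻¹ * (if i ∈ S then sgn S i else 0))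
              * rawH (rc ω) (S.erase i) T a)
            = fun T a => ∑ i, ((((-(p : ℤ)) : ℤ) : ℂ)⁻¹ * (if i ∈ S then sgn S i else 0))
              * rawD (rawH (rc ω) (S.erase i)) T a :=
          funext fun T => funext fun a => rawD_lin _ _ T a
        rw [hDlin]
        exact (rawC_lin _ _ T a).symm
      rw [hstep, hcomb]
      have hG : (fun T a => ∑ i,
              ((((-(p : ℤ)) : ℤ) : ℂ)⁻¹ * (if i ∈ S then sgn S i else 0))
              * rawH (rc ω) (S.erase i) T a)
          = fun T a => (((-(p : ℤ)) : ℤ) : ℂ)⁻¹ * rc ω S T a := by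
        funext T a
        have h4 : (∑ i, ((((-(p : ℤ)) : ℤ) : ℂ)⁻¹ * (if i ∈ S then sgn S i else 0))
              * rawH (rc ω) (S.erase i) T a)
            = (((-(p : ℤ)) : ℤ) : ℂ)⁻¹ * rawCD (rawH (rc ω)) S T a := by
          rw [rawCD, Finset.mul_sum]
          refine Finset.sum_congr rfl fun i _ => ?_
          by_cases hi : i ∈ S
          · rw [if_pos hi, if_pos hi]; ring
          · rw [if_neg hi, if_neg hi]; ring
        rw [h4, raw_homotopy (rc ω) hzero S T a]
      rw [hG]
      have h6 : rawC (rawD (fun T a => (((-(p : ℤ)) : ℤ) : ℂ)⁻¹ * rc ω S T a)) T a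
          = (((-(p : ℤ)) : ℤ) : ℂ)⁻¹ * rawC (rawD (fun T a => rc ω S T a)) T a := by
        rw [show rawD (fun T a => (((-(p : ℤ)) : ℤ) : ℂ)⁻¹ * rc ω S T a)
            = fun T a => (((-(p : ℤ)) : ℤ) : ℂ)⁻¹ * rawD (fun T a => rc ω S T a) T a from
          funext fun T => funext fun a => rawD_smul _ _ T a]
        exact rawC_smul _ _ T a
      rw [h6]
      have heuler : ∀ T a, rawC (fun T a => rc ω S T a) T a = 0 := by
        intro T a
        by_cases hS : S.card = k + 1 + 1
        · have h7 : (fun T a => rc ω S T a) = rext (ω ⟨S, hS⟩) :=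
            funext fun T => funext fun a => rc_apply ω ⟨S, hS⟩ T a
          rw [h7]
          exact rawC_eq_zero_of_isSection (hω ⟨S, hS⟩) T a
        · refine rawC_zero _ ?_ T a
          intro T a
          simp only [rc]
          rw [dif_neg (fun hc => hS hc.1)]
      have hcartan := raw_cartan (fun T a => rc ω S T a) T a
      rw [rawD_zero _ heuler T a, add_zero] at hcartan
      rw [hcartan]
      have hfac : (((∑ i, a i : ℤ) : ℂ) + ((T.card : ℕ) : ℂ)) * rc ω S T a
          = (((-(p : ℤ)) : ℤ) : ℂ) * rc ω S T a := by
        by_cases h0 : rc ω S T a = 0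
        · rw [h0, mul_zero, mul_zero]
        · have hcard : S.card = k + 1 + 1 ∧ T.card = q := by
            by_contra hc
            exact h0 (by simp only [rc]; rw [dif_neg hc])
          have hval : ω ⟨S, hcard.1⟩ ⟨T, hcard.2⟩ a ≠ 0 := by
            simp only [rc] at h0
            rw [dif_pos hcard] at h0
            exact h0
          have hdeg := ((hω ⟨S, hcard.1⟩).1 ⟨T, hcard.2⟩ a hval).2
          have h8 : (((∑ i, a i : ℤ) : ℂ) + ((T.card : ℕ) : ℂ)) = (((-(p : ℤ)) : ℤ) : ℂ) := by
            rw [hdeg, hcard.2]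
            push_cast
            ring
          rw [h8]
      rw [hfac, ← mul_assoc, inv_mul_cancel₀ hmne, one_mul]

end BottVanishing
end

section
/- Camacho–Sad relation on an invariant line, via one-dimensional Lefschetz: let g : ℙ¹ → ℙ¹ be the restriction to the line at infinity of the endomorphism f_v associated to a non-dicritic polynomial vector field; if g has simple fixed points p_i with multipliers λ_i ≠ 1 and the conormal action at p_i is given by scalars μ_i, then ∑_i μ_i/(1 − λ_i) = L, the Lefschetz number of the lift to the conormal sheaf N*_L ≅ O_{ℙ¹}(−1); in particular for a lift φ acting on H⁰ and H¹ of O(−1) (both zero), ∑_i μ_i/(1 − λ_i) = 0. -/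
open Polynomial
open Finset in
lemma residue_sum_eq_zero (S R : Polynomial ℂ) (hn : 2 ≤ S.natDegree)
    (hsq : Squarefree S) (hR : R.natDegree ≤ S.natDegree - 2) :
    ∑ z ∈ S.roots.toFinset, R.eval z / S.derivative.eval z = 0 := by
  classical
  have hS0 : S ≠ 0 := hsq.ne_zero
  have hsep : S.Separable := PerfectField.separable_iff_squarefree.mpr hsq
  have hnodup : S.roots.Nodup := nodup_roots hsep
  have hsplit : S.Splits := IsAlgClosed.splits S
  set s : Finset ℂ := S.roots.toFinset with hs
  have hcard : #s = S.natDegree := by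
    rw [hs, Multiset.toFinset_card_of_nodup hnodup,
      ← (splits_iff_card_roots).mp hsplit]
  have hSeq : S = C S.leadingCoeff * Lagrange.nodal s id := by
    conv_lhs => rw [hsplit.eq_prod_roots]
    congr 1
    rw [Lagrange.nodal_eq, Finset.prod_eq_multiset_prod, hs, Multiset.toFinset_val,
      Multiset.dedup_eq_self.mpr hnodup]
    simp
  -- derivative at nodes
  have hlc : S.leadingCoeff ≠ 0 := leadingCoeff_ne_zero.mpr hS0
  have hinj : Set.InjOn (id : ℂ → ℂ) s := Function.injective_id.injOn
  have hderiv : ∀ z ∈ s, S.derivative.eval z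
      = S.leadingCoeff * (Lagrange.nodal (s.erase z) id).eval z := by
    intro z hz
    conv_lhs => rw [hSeq]
    rw [derivative_mul, derivative_C, zero_mul, zero_add, eval_mul, eval_C]
    exact congrArg _ (Lagrange.eval_nodal_derivative_eval_node_eq (v := id) hz)
  have hnodal_ne : ∀ z ∈ s, (Lagrange.nodal (s.erase z) id).eval z ≠ 0 := by
    intro z hz
    exact Lagrange.eval_nodal_not_at_node (fun i hi => (Finset.ne_of_mem_erase hi).symm)
  -- interpolation
  have hRdeg : R.degree < (#s : WithBot ℕ) := by
    calc R.degree ≤ R.natDegree := degree_le_natDegree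
    _ < (#s : WithBot ℕ) := by
        rw [hcard]; exact_mod_cast lt_of_le_of_lt hR (by omega)
  have hint : R = Lagrange.interpolate s id (fun z => R.eval z) :=
    Lagrange.eq_interpolate hinj hRdeg
  have hcoeff : R.coeff (#s - 1) = 0 :=
    coeff_eq_zero_of_natDegree_lt (by rw [hcard]; omega)
  rw [hint, Lagrange.interpolate_apply, finset_sum_coeff] at hcoeff
  have hbasis : ∀ z ∈ s, (C (R.eval z) * Lagrange.basis s id z).coeff (#s - 1)
      = R.eval z * ((Lagrange.nodal (s.erase z) id).eval z)⁻¹ := by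
    intro z hz
    rw [coeff_C_mul]
    congr 1
    have hdeg : (Lagrange.basis s id z).natDegree = #s - 1 := Lagrange.natDegree_basis hinj hz
    rw [← hdeg, ← leadingCoeff]
    rw [Lagrange.basis, leadingCoeff_prod]
    rw [Lagrange.eval_nodal, ← Finset.prod_inv_distrib]
    refine Finset.prod_congr rfl fun w hw => ?_
    rw [Lagrange.basisDivisor, leadingCoeff_mul, leadingCoeff_C, leadingCoeff_X_sub_C, mul_one]
    rfl
  rw [Finset.sum_congr rfl hbasis] at hcoeff
  have : ∑ z ∈ s, R.eval z / S.derivative.eval z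
      = S.leadingCoeff⁻¹ * ∑ z ∈ s, R.eval z * ((Lagrange.nodal (s.erase z) id).eval z)⁻¹ := by
    rw [Finset.mul_sum]
    refine Finset.sum_congr rfl fun z hz => ?_
    rw [hderiv z hz, div_eq_mul_inv, mul_inv]
    ring
  rw [this, hcoeff, mul_zero]

/-- Camacho–Sad relation on an invariant line via one-dimensional Lefschetz on the
conormal sheaf `O_{ℙ¹}(−1)` (whose `H⁰` and `H¹` both vanish, so every Lefschetz number
vanishes): let `g = p/q` be a degree-`d` endomorphism of `ℙ¹` whose fixed points are the
simple roots `z_i` of `p(z) − z·q(z)` with multipliers `λ_i ≠ 1`.  A lift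
`φ : g*O(−1) → O(−1)` is given by a homogeneous polynomial of degree `d − 1`, i.e. in the
affine chart by a polynomial `h` of degree `≤ d − 1`, and it acts on the fiber of `O(−1)`
at `z_i` by the scalar `μ_i = h(z_i)/q(z_i)`.  Then `∑_i μ_i/(1 − λ_i) = 0`. -/
theorem camacho_sad_via_lefschetz_on_conormal (d : ℕ) (hd : 1 ≤ d)
    (p q h : Polynomial ℂ)
    (hp : p.natDegree ≤ d) (hq : q.natDegree ≤ d)
    (hS : (p - X * q).natDegree = d + 1)
    (hsq : Squarefree (p - X * q))
    (hq0 : ∀ z ∈ (p - X * q).roots, q.eval z ≠ 0)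
    (hh : h.natDegree ≤ d - 1)
    (hmul : ∀ z ∈ (p - X * q).roots, multiplier p q z ≠ 1) :
    ∑ z ∈ (p - X * q).roots.toFinset,
      (h.eval z / q.eval z) / (1 - multiplier p q z) = 0 := by
  classical
  set S : Polynomial ℂ := p - X * q with hSdef
  have hres : ∑ z ∈ S.roots.toFinset, h.eval z / S.derivative.eval z = 0 :=
    residue_sum_eq_zero S h (by omega) hsq (by omega)
  have hterm : ∀ z ∈ S.roots.toFinset,
      (h.eval z / q.eval z) / (1 - multiplier p q z)
        = -(h.eval z / S.derivative.eval z) := by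
    intro z hz
    have hzr : z ∈ S.roots := Multiset.mem_toFinset.mp hz
    have hqz : q.eval z ≠ 0 := hq0 z hzr
    have hone : 1 - multiplier p q z ≠ 0 := sub_ne_zero.mpr (Ne.symm (hmul z hzr))
    have hroot : p.eval z = z * q.eval z := by
      have h2 : Polynomial.eval z S = 0 := (mem_roots hsq.ne_zero).mp hzr
      have h3 : p.eval z - z * q.eval z = 0 := by simpa [hSdef] using h2
      exact sub_eq_zero.mp h3
    have hSd : S.derivative.eval z
        = p.derivative.eval z - q.eval z - z * q.derivative.eval z := by
      simp [hSdef, derivative_sub, derivative_mul]; ring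
    have h1 : 1 - multiplier p q z = -(S.derivative.eval z) / q.eval z := by
      rw [hSd]
      unfold multiplier
      field_simp
      ring_nf
      linear_combination (q.derivative.eval z) * hroot
    have hS' : S.derivative.eval z ≠ 0 := by
      intro h0
      rw [h1, h0] at hone
      simp at hone
    rw [h1]
    field_simp
  rw [Finset.sum_congr rfl hterm, Finset.sum_neg_distrib, hres, neg_zero]
end
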